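/- arXiv:1810.03021 — 6 statements merged into one kernel-verified Lean document; each statement's English description precedes it below -/
import Mathlib

section
/- Assume W satisfies condition (C5) with exponent μ > 2 and condition (C6) with m := inf{W(t,q) : t ∈ ℝ, |q| = 1} > 0. Then for every k ∈ ℕ with k ≥ 1, every ζ ∈ ℝ and every continuous 2k-periodic function q : ℝ → ℝⁿ, one has ∫_{-k}^{k} W(t, ζq(t)) dt ≥ m|ζ|^μ ∫_{-k}^{k} |q(t)|^μ dt − 2km. -/
open MeasureTheory Filter RealInnerProductSpace

/-- **Lemma 1.** Under (C5) and (C6), for every `k ≥ 1`, `ζ ∈ ℝ` and every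
continuous `2k`-periodic `q : ℝ → ℝⁿ`,
`∫_{-k}^{k} W(t, ζ q(t)) dt ≥ m |ζ|^μ ∫_{-k}^{k} |q(t)|^μ dt - 2 k m`. -/
theorem stmt1 {n : ℕ}
    (W : ℝ → EuclideanSpace ℝ (Fin n) → ℝ)
    (hWsmooth : ContDiff ℝ 1 (Function.uncurry W))
    (μ : ℝ) (hμ : 2 < μ)
    (hC5 : ∀ (t : ℝ) (q : EuclideanSpace ℝ (Fin n)), q ≠ 0 →
      0 < μ * W t q ∧ μ * W t q ≤ ⟪q, gradient (W t) q⟫)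
    (m : ℝ)
    (hm : IsGLB {y : ℝ | ∃ (t : ℝ) (q : EuclideanSpace ℝ (Fin n)), ‖q‖ = 1 ∧ y = W t q} m)
    (hm0 : 0 < m)
    (k : ℕ) (hk : 1 ≤ k) (ζ : ℝ)
    (q : ℝ → EuclideanSpace ℝ (Fin n))
    (hqcont : Continuous q) (hqper : Function.Periodic q (2 * k)) :
    (∫ t in (-(k:ℝ))..(k:ℝ), W t (ζ • q t)) ≥
      (m * |ζ| ^ μ * ∫ t in (-(k:ℝ))..(k:ℝ), ‖q t‖ ^ μ) - 2 * k * m := by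
  have hμ0 : (0:ℝ) < μ := by linarith
  -- n = 0 is degenerate: the set in `hm` is empty, contradicting `IsGLB`.
  rcases Nat.eq_zero_or_pos n with hn | hn
  · exfalso
    subst hn
    have hlb : (m + 1) ∈ lowerBounds
        {y : ℝ | ∃ (t : ℝ) (q : EuclideanSpace ℝ (Fin 0)), ‖q‖ = 1 ∧ y = W t q} := by
      rintro y ⟨t, v, hv, rfl⟩
      exfalso
      have h0 : ‖v‖ = 0 := by
        rw [EuclideanSpace.norm_eq]
        simp
      rw [h0] at hv; norm_num at hv
    have := hm.2 hlb
    linarith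
  -- a unit vector
  obtain ⟨e, he⟩ : ∃ e : EuclideanSpace ℝ (Fin n), ‖e‖ = 1 :=
    ⟨EuclideanSpace.single ⟨0, hn⟩ 1, by simp⟩
  have hWt : ∀ t : ℝ, ContDiff ℝ 1 (W t) := fun t =>
    hWsmooth.comp ((contDiff_const.prodMk contDiff_id))
  have grad_inner : ∀ (t : ℝ) (x y : EuclideanSpace ℝ (Fin n)),
      ⟪gradient (W t) x, y⟫ = fderiv ℝ (W t) x y := fun t x y => by
    rw [gradient]; exact InnerProductSpace.toDual_symm_apply
  -- W is nonnegative everywhere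
  have hWpos : ∀ (t : ℝ) (v : EuclideanSpace ℝ (Fin n)), v ≠ 0 → 0 < W t v := by
    intro t v hv
    have := (hC5 t v hv).1
    nlinarith
  have hWnonneg : ∀ (t : ℝ) (v : EuclideanSpace ℝ (Fin n)), 0 ≤ W t v := by
    intro t v
    rcases eq_or_ne v 0 with rfl | hv
    · -- continuity: W t (s • e) > 0 for s > 0 tends to W t 0
      have hcont : Filter.Tendsto (fun s : ℝ => W t (s • e)) (nhdsWithin 0 (Set.Ioi 0))
          (nhds (W t ((0:ℝ) • e))) := by
        have : Continuous (fun s : ℝ => W t (s • e)) :=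
          (hWt t).continuous.comp (continuous_id.smul continuous_const)
        exact (this.tendsto 0).mono_left nhdsWithin_le_nhds
      rw [zero_smul] at hcont
      refine ge_of_tendsto hcont ?_
      filter_upwards [self_mem_nhdsWithin] with s hs
      have hs0 : (0:ℝ) < s := hs
      have he0 : e ≠ 0 := by intro h; rw [h] at he; simp at he
      have hne : s • e ≠ 0 := smul_ne_zero hs0.ne' he0
      exact (hWpos t _ hne).le
    · exact (hWpos t v hv).le
  -- key pointwise estimate
  have key : ∀ (t : ℝ) (v : EuclideanSpace ℝ (Fin n)), m * ‖v‖ ^ μ - m ≤ W t v := by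
    intro t v
    rcases le_or_gt ‖v‖ 1 with hv1 | hv1
    · have : ‖v‖ ^ μ ≤ 1 := Real.rpow_le_one (norm_nonneg v) hv1 hμ0.le
      have h0 := hWnonneg t v
      nlinarith
    · -- ‖v‖ > 1 : the Gronwall-type argument
      set r : ℝ := ‖v‖ with hr
      have hr1 : 1 < r := hv1
      have hr0 : 0 < r := by linarith
      set u : EuclideanSpace ℝ (Fin n) := r⁻¹ • v with hu
      have hru : r • u = v := by
        rw [hu, smul_smul, mul_inv_cancel₀ hr0.ne', one_smul]
      have hunorm : ‖u‖ = 1 := by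
        rw [hu, norm_smul, norm_inv, Real.norm_eq_abs, abs_of_pos hr0, inv_mul_cancel₀ hr0.ne']
      set F : ℝ → ℝ := fun s => W t (s • u) * s ^ (-μ) with hF
      -- derivative facts
      have hderiv : ∀ s : ℝ, 0 < s →
          HasDerivAt F (fderiv ℝ (W t) (s • u) u * s ^ (-μ)
            + W t (s • u) * (-μ * s ^ (-μ - 1))) s := by
        intro s hs
        have h1 : HasDerivAt (fun s : ℝ => s • u) u s := by
          simpa using (hasDerivAt_id s).smul_const u
        have h2 : HasDerivAt (fun s : ℝ => W t (s • u)) (fderiv ℝ (W t) (s • u) u) s :=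
          (((hWt t).differentiable one_ne_zero (s • u)).hasFDerivAt).comp_hasDerivAt s h1
        have h3 : HasDerivAt (fun s : ℝ => s ^ (-μ)) (-μ * s ^ (-μ - 1)) s :=
          Real.hasDerivAt_rpow_const (Or.inl hs.ne')
        exact h2.mul h3
      have hC5' : ∀ s : ℝ, 0 < s →
          μ * W t (s • u) ≤ s * fderiv ℝ (W t) (s • u) u := by
        intro s hs
        have hu0 : u ≠ 0 := by intro h; rw [h] at hunorm; simp at hunorm
        have hne : s • u ≠ 0 := smul_ne_zero hs.ne' hu0
        have h := (hC5 t (s • u) hne).2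
        rwa [real_inner_smul_left, real_inner_comm, grad_inner] at h
      -- F is monotone on [1, ∞)
      have hmono : MonotoneOn F (Set.Ici (1:ℝ)) := by
        apply monotoneOn_of_deriv_nonneg (convex_Ici 1)
        · intro s hs
          have hs0 : (0:ℝ) < s := lt_of_lt_of_le one_pos hs
          exact ((hderiv s hs0).continuousAt).continuousWithinAt
        · intro s hs
          rw [interior_Ici] at hs
          exact ((hderiv s (lt_trans one_pos hs)).differentiableAt).differentiableWithinAt
        · intro s hs
          rw [interior_Ici] at hs
          have hs0 : (0:ℝ) < s := lt_trans one_pos hs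
          rw [(hderiv s hs0).deriv]
          have e1 : s ^ (-μ) = s ^ (-μ - 1) * s := by
            rw [← Real.rpow_add_one hs0.ne']; ring_nf
          have e2 : (0:ℝ) < s ^ (-μ - 1) := Real.rpow_pos_of_pos hs0 _
          have e3 := hC5' s hs0
          calc (0:ℝ) ≤ s ^ (-μ - 1) * (s * fderiv ℝ (W t) (s • u) u - μ * W t (s • u)) :=
                mul_nonneg e2.le (by linarith)
            _ = fderiv ℝ (W t) (s • u) u * s ^ (-μ) + W t (s • u) * (-μ * s ^ (-μ - 1)) := by
                rw [e1]; ring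
      have hstep := hmono (Set.self_mem_Ici) (Set.mem_Ici.mpr hr1.le) hr1.le
      have hF1 : F 1 = W t u := by simp [hF]
      have hmle : m ≤ W t u := hm.1 ⟨t, u, hunorm, rfl⟩
      have hFr : F r = W t v * r ^ (-μ) := by rw [hF]; simp only [hru]
      have hpos : (0:ℝ) < r ^ μ := Real.rpow_pos_of_pos hr0 _
      have hneg : r ^ (-μ) = (r ^ μ)⁻¹ := Real.rpow_neg hr0.le μ
      have : m ≤ W t v * (r ^ μ)⁻¹ := by
        rw [← hneg, ← hFr]
        exact le_trans hmle (by rw [← hF1]; exact hstep)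
      have h2 : m * r ^ μ ≤ W t v := by
        have h3 := mul_le_mul_of_nonneg_right this hpos.le
        rwa [mul_assoc, inv_mul_cancel₀ hpos.ne', mul_one] at h3
      linarith [h2, hm0]
  -- now the integral estimate
  have hkR : (1:ℝ) ≤ (k:ℝ) := by exact_mod_cast hk
  have hab : (-(k:ℝ)) ≤ (k:ℝ) := by linarith
  have cont1 : Continuous fun t => W t (ζ • q t) :=
    hWsmooth.continuous.comp (continuous_id.prodMk (hqcont.const_smul ζ))
  have cont2 : Continuous fun t : ℝ => ‖q t‖ ^ μ :=
    (hqcont.norm).rpow_const (fun t => Or.inr hμ0.le)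
  have contlow : Continuous fun t : ℝ => m * |ζ| ^ μ * ‖q t‖ ^ μ - m :=
    ((continuous_const.mul cont2).sub continuous_const)
  have hptwise : ∀ t ∈ Set.Icc (-(k:ℝ)) (k:ℝ),
      m * |ζ| ^ μ * ‖q t‖ ^ μ - m ≤ W t (ζ • q t) := by
    intro t _
    have := key t (ζ • q t)
    have hnorm : ‖ζ • q t‖ ^ μ = |ζ| ^ μ * ‖q t‖ ^ μ := by
      rw [norm_smul, Real.norm_eq_abs, Real.mul_rpow (abs_nonneg ζ) (norm_nonneg _)]
    rw [hnorm] at this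
    linarith
  have hmono : (∫ t in (-(k:ℝ))..(k:ℝ), (m * |ζ| ^ μ * ‖q t‖ ^ μ - m))
      ≤ ∫ t in (-(k:ℝ))..(k:ℝ), W t (ζ • q t) := intervalIntegral.integral_mono_on hab
    (contlow.intervalIntegrable _ _) (cont1.intervalIntegrable _ _) hptwise
  have hcalc : (∫ t in (-(k:ℝ))..(k:ℝ), (m * |ζ| ^ μ * ‖q t‖ ^ μ - m))
      = m * |ζ| ^ μ * (∫ t in (-(k:ℝ))..(k:ℝ), ‖q t‖ ^ μ) - 2 * k * m := by
    rw [intervalIntegral.integral_sub (f := fun t => m * |ζ| ^ μ * ‖q t‖ ^ μ)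
        ((continuous_const.mul cont2).intervalIntegrable _ _)
        ((continuous_const.intervalIntegrable _ _)),
      intervalIntegral.integral_const_mul, intervalIntegral.integral_const]
    simp only [smul_eq_mul]
    ring
  rw [hcalc] at hmono
  linarith
end

section
/- Assume K satisfies condition (C2) with constants b₁, b₂ > 0, W satisfies condition (C5) with exponent μ > 2, and set M := sup{W(t,q) : t ∈ ℝ, |q| = 1} (assumed finite) and b̄₁ := min{1, 2b₁}. Let f : ℝ → ℝⁿ be continuous and square integrable over ℝ. Let k ∈ ℕ with k ≥ 1 and let q : ℝ → ℝⁿ be a continuously differentiable 2k-periodic function with ∫_{−k}^{k}(|q̇(t)|² + |q(t)|²) dt = 1/2 and |q(t)| ≤ 1 for all t. Then I_k(q) ≥ (√2/2)·((√2/4)(b̄₁ − 2M) − (∫_{−∞}^{∞}|f(t)|² dt)^{1/2}). -/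
open MeasureTheory Filter RealInnerProductSpace
open Set

lemma aux_Wb {n : ℕ} (W : ℝ → EuclideanSpace ℝ (Fin n) → ℝ)
    (hWsmooth : ContDiff ℝ 1 (Function.uncurry W))
    (μ : ℝ) (hμ : 2 < μ)
    (hC5 : ∀ (t : ℝ) (q : EuclideanSpace ℝ (Fin n)), q ≠ 0 →
      0 < μ * W t q ∧ μ * W t q ≤ ⟪q, gradient (W t) q⟫)
    (M : ℝ)
    (hM : IsLUB {y : ℝ | ∃ (t : ℝ) (q : EuclideanSpace ℝ (Fin n)), ‖q‖ = 1 ∧ y = W t q} M) :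
    0 < M ∧ ∀ (t : ℝ) (x : EuclideanSpace ℝ (Fin n)), ‖x‖ ≤ 1 → W t x ≤ M * ‖x‖ ^ 2 := by
  have hμ0 : 0 < μ := by linarith
  -- continuity and differentiability of W t
  have hWc : ∀ t : ℝ, Continuous (W t) := fun t =>
    hWsmooth.continuous.comp (continuous_const.prodMk continuous_id)
  have hWd : ∀ (t : ℝ) (x : EuclideanSpace ℝ (Fin n)), DifferentiableAt ℝ (W t) x := by
    intro t x
    exact (hWsmooth.differentiable one_ne_zero (t, x)).comp x
      ((differentiableAt_const t).prodMk differentiableAt_id)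
  -- existence of a unit vector
  obtain ⟨u₀, hu₀⟩ : ∃ u : EuclideanSpace ℝ (Fin n), ‖u‖ = 1 := by
    rcases Nat.eq_zero_or_pos n with h0 | hpos
    · exfalso
      have hemp : {y : ℝ | ∃ (t : ℝ) (q : EuclideanSpace ℝ (Fin n)), ‖q‖ = 1 ∧ y = W t q} = ∅ := by
        ext y
        simp only [mem_setOf_eq, mem_empty_iff_false, iff_false]
        rintro ⟨t, v, hv, -⟩
        subst h0
        have : v = 0 := Subsingleton.elim v 0
        rw [this] at hv; simp at hv
      have h1 : (M - 1) ∈ upperBounds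
          {y : ℝ | ∃ (t : ℝ) (q : EuclideanSpace ℝ (Fin n)), ‖q‖ = 1 ∧ y = W t q} := by
        rw [hemp]; intro y hy; exact absurd hy (Set.notMem_empty y)
      have := hM.2 h1
      linarith
    · exact ⟨EuclideanSpace.single ⟨0, hpos⟩ 1, by simp⟩
  have hu₀0 : u₀ ≠ 0 := by
    intro h; rw [h] at hu₀; simp at hu₀
  have hMpos : 0 < M := by
    have h1 := (hC5 0 u₀ hu₀0).1
    have h2 : W 0 u₀ ≤ M := hM.1 ⟨0, u₀, hu₀, rfl⟩
    nlinarith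
  refine ⟨hMpos, ?_⟩
  -- derivative of s ↦ W t (s • u)
  have hgd : ∀ (t : ℝ) (u : EuclideanSpace ℝ (Fin n)) (s : ℝ),
      HasDerivAt (fun s : ℝ => W t (s • u)) (⟪u, gradient (W t) (s • u)⟫) s := by
    intro t u s
    have h1 : HasFDerivAt (W t) (InnerProductSpace.toDual ℝ _ (gradient (W t) (s • u))) (s • u) :=
      (hWd t (s • u)).hasGradientAt.hasFDerivAt
    have h2 : HasDerivAt (fun s : ℝ => s • u) u s := by
      simpa using (hasDerivAt_id s).smul_const u
    have h3 := h1.comp_hasDerivAt s h2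
    have h4 : (InnerProductSpace.toDual ℝ _ (gradient (W t) (s • u))) u
        = ⟪u, gradient (W t) (s • u)⟫ := by
      rw [InnerProductSpace.toDual_apply_apply, real_inner_comm]
    rw [h4] at h3
    exact h3
  -- key bound for scalings of unit vectors
  have key : ∀ (t : ℝ) (u : EuclideanSpace ℝ (Fin n)), ‖u‖ = 1 → ∀ r : ℝ, 0 < r → r ≤ 1 →
      W t (r • u) ≤ M * r ^ μ := by
    intro t u hu r hr hr1
    have hu0 : u ≠ 0 := by intro h; rw [h] at hu; simp at hu
    set g : ℝ → ℝ := fun s => W t (s • u) with hgdef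
    have hhd : ∀ s : ℝ, 0 < s → HasDerivAt (fun s => g s / s ^ μ)
        ((⟪u, gradient (W t) (s • u)⟫ * s ^ μ - g s * (μ * s ^ (μ - 1))) / (s ^ μ) ^ 2) s := by
      intro s hs
      exact (hgd t u s).div (Real.hasDerivAt_rpow_const (Or.inl hs.ne'))
        (Real.rpow_pos_of_pos hs μ).ne'
    have hnum : ∀ s : ℝ, 0 < s →
        0 ≤ ⟪u, gradient (W t) (s • u)⟫ * s ^ μ - g s * (μ * s ^ (μ - 1)) := by
      intro s hs
      have hsu : s • u ≠ 0 := smul_ne_zero hs.ne' hu0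
      have h5 := (hC5 t (s • u) hsu).2
      have h6 : μ * g s ≤ s * ⟪u, gradient (W t) (s • u)⟫ := by
        rw [real_inner_smul_left] at h5
        exact h5
      have hpow : s ^ μ = s ^ (μ - 1) * s := by
        rw [← Real.rpow_add_one hs.ne' (μ - 1)]; ring_nf
      have h7 : (0:ℝ) ≤ (s * ⟪u, gradient (W t) (s • u)⟫ - μ * g s) * s ^ (μ - 1) :=
        mul_nonneg (sub_nonneg.2 h6) (Real.rpow_pos_of_pos hs _).le
      calc (0:ℝ) ≤ (s * ⟪u, gradient (W t) (s • u)⟫ - μ * g s) * s ^ (μ - 1) := h7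
        _ = ⟪u, gradient (W t) (s • u)⟫ * s ^ μ - g s * (μ * s ^ (μ - 1)) := by
            rw [hpow]; ring
    have hmono : MonotoneOn (fun s => g s / s ^ μ) (Icc r 1) := by
      apply monotoneOn_of_deriv_nonneg (convex_Icc r 1)
      · intro s hs
        exact ((hhd s (lt_of_lt_of_le hr hs.1)).continuousAt).continuousWithinAt
      · intro s hs
        rw [interior_Icc] at hs
        exact ((hhd s (lt_trans hr hs.1)).differentiableAt).differentiableWithinAt
      · intro s hs
        rw [interior_Icc] at hs
        have hs0 : 0 < s := lt_trans hr hs.1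
        rw [(hhd s hs0).deriv]
        exact div_nonneg (hnum s hs0) (sq_nonneg _)
    have h8 : g r / r ^ μ ≤ g 1 / (1:ℝ) ^ μ :=
      hmono ⟨le_refl r, hr1⟩ ⟨hr1, le_refl 1⟩ hr1
    rw [Real.one_rpow, div_one] at h8
    have h9 : g 1 ≤ M := by
      have : W t ((1:ℝ) • u) = W t u := by rw [one_smul]
      rw [hgdef]; simp only [this]
      exact hM.1 ⟨t, u, hu, rfl⟩
    have hrpow : (0:ℝ) < r ^ μ := Real.rpow_pos_of_pos hr μ
    have := (div_le_iff₀ hrpow).1 h8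
    calc W t (r • u) = g r := rfl
      _ ≤ g 1 * r ^ μ := this
      _ ≤ M * r ^ μ := by nlinarith
  intro t x hx
  rcases eq_or_ne x 0 with hx0 | hx0
  · subst hx0
    have hW0 : W t (0 : EuclideanSpace ℝ (Fin n)) ≤ 0 := by
      have hlim : Tendsto (fun s : ℝ => W t (s • u₀)) (nhdsWithin 0 (Ioi 0))
          (nhds (W t (0 : EuclideanSpace ℝ (Fin n)))) := by
        have hc : Continuous (fun s : ℝ => W t (s • u₀)) :=
          (hWc t).comp (continuous_id.smul continuous_const)
        have := hc.tendsto 0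
        simp only [zero_smul] at this
        exact this.mono_left nhdsWithin_le_nhds
      have hlim2 : Tendsto (fun s : ℝ => M * s) (nhdsWithin 0 (Ioi 0)) (nhds 0) := by
        have : Tendsto (fun s : ℝ => M * s) (nhds 0) (nhds (M * 0)) :=
          (continuous_const.mul continuous_id).tendsto 0
        rw [mul_zero] at this
        exact this.mono_left nhdsWithin_le_nhds
      refine le_of_tendsto_of_tendsto hlim hlim2 ?_
      have hmem : Ioc (0:ℝ) 1 ∈ nhdsWithin (0:ℝ) (Ioi 0) :=
        Ioc_mem_nhdsGT_of_mem ⟨le_refl 0, one_pos⟩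
      filter_upwards [hmem] with s hs
      have h1 := key t u₀ hu₀ s hs.1 hs.2
      have h2 : s ^ μ ≤ s ^ (1:ℝ) :=
        Real.rpow_le_rpow_of_exponent_ge hs.1 hs.2 (by linarith)
      rw [Real.rpow_one] at h2
      calc W t (s • u₀) ≤ M * s ^ μ := h1
        _ ≤ M * s := by nlinarith
    simpa using hW0
  · have hr : 0 < ‖x‖ := norm_pos_iff.2 hx0
    set u : EuclideanSpace ℝ (Fin n) := ‖x‖⁻¹ • x with hudef
    have hu : ‖u‖ = 1 := norm_smul_inv_norm hx0
    have hxu : ‖x‖ • u = x := by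
      rw [hudef, smul_smul, mul_inv_cancel₀ hr.ne', one_smul]
    have h1 := key t u hu ‖x‖ hr hx
    rw [hxu] at h1
    have h2 : ‖x‖ ^ μ ≤ ‖x‖ ^ ((2:ℕ):ℝ) :=
      Real.rpow_le_rpow_of_exponent_ge hr hx (by push_cast; linarith)
    rw [Real.rpow_natCast] at h2
    calc W t x ≤ M * ‖x‖ ^ μ := h1
      _ ≤ M * ‖x‖ ^ 2 := by nlinarith

/-- **mountain-pass geometry: estimate on the sphere of radius √2/2.**
Under (C2), (C5), with `M := sup {W t q : ‖q‖ = 1}` finite and `b̄₁ := min 1 (2 b₁)`, for a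
`C¹`, `2k`-periodic `q` with `‖q‖²_{E_k} = 1/2` and `‖q t‖ ≤ 1` for all `t`,
`I_k(q) ≥ (√2/2) ((√2/4)(b̄₁ - 2M) - ‖f‖_{L²})`. -/
theorem stmt6 {n : ℕ}
    (K W : ℝ → EuclideanSpace ℝ (Fin n) → ℝ)
    (hKsmooth : ContDiff ℝ 1 (Function.uncurry K))
    (hWsmooth : ContDiff ℝ 1 (Function.uncurry W))
    (b₁ b₂ : ℝ) (hb₁ : 0 < b₁) (hb₂ : 0 < b₂)
    (hC2 : ∀ (t : ℝ) (q : EuclideanSpace ℝ (Fin n)),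
      b₁ * ‖q‖ ^ 2 ≤ K t q ∧ K t q ≤ b₂ * ‖q‖ ^ 2)
    (μ : ℝ) (hμ : 2 < μ)
    (hC5 : ∀ (t : ℝ) (q : EuclideanSpace ℝ (Fin n)), q ≠ 0 →
      0 < μ * W t q ∧ μ * W t q ≤ ⟪q, gradient (W t) q⟫)
    (M : ℝ)
    (hM : IsLUB {y : ℝ | ∃ (t : ℝ) (q : EuclideanSpace ℝ (Fin n)), ‖q‖ = 1 ∧ y = W t q} M)
    (f : ℝ → EuclideanSpace ℝ (Fin n))
    (hfcont : Continuous f) (hfsq : Integrable (fun t : ℝ => ‖f t‖ ^ 2))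
    (k : ℕ) (hk : 1 ≤ k)
    (q : ℝ → EuclideanSpace ℝ (Fin n))
    (hq : ContDiff ℝ 1 q) (hqper : Function.Periodic q (2 * k))
    (hqnorm : (∫ t in (-(k:ℝ))..(k:ℝ), (‖deriv q t‖ ^ 2 + ‖q t‖ ^ 2)) = 1 / 2)
    (hqle : ∀ t : ℝ, ‖q t‖ ≤ 1) :
    (∫ t in (-(k:ℝ))..(k:ℝ),
        ((1:ℝ)/2 * ‖deriv q t‖ ^ 2 + K t (q t) - W t (q t) + ⟪f t, q t⟫)) ≥
      Real.sqrt 2 / 2 * (Real.sqrt 2 / 4 * (min 1 (2 * b₁) - 2 * M) -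
        (∫ t : ℝ, ‖f t‖ ^ 2) ^ ((1:ℝ)/2)) := by
  obtain ⟨hMpos, hWb⟩ := aux_Wb W hWsmooth μ hμ hC5 M hM
  set b : ℝ := min 1 (2 * b₁) with hbdef
  have hb1 : b ≤ 1 := min_le_left _ _
  have hb2 : b ≤ 2 * b₁ := min_le_right _ _
  have hkpos : (0:ℝ) < k := by exact_mod_cast hk
  have hle : (-(k:ℝ)) ≤ (k:ℝ) := by linarith
  -- continuity
  have hqc : Continuous q := hq.continuous
  have hq'c : Continuous (deriv q) := hq.continuous_deriv le_rfl
  have hKc : Continuous (fun t => K t (q t)) :=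
    hKsmooth.continuous.comp (continuous_id.prodMk hqc)
  have hWqc : Continuous (fun t => W t (q t)) :=
    hWsmooth.continuous.comp (continuous_id.prodMk hqc)
  have hipc : Continuous (fun t => ⟪f t, q t⟫) := hfcont.inner hqc
  -- integrabilities
  have iF : IntervalIntegrable
      (fun t => (1:ℝ)/2 * ‖deriv q t‖ ^ 2 + K t (q t) - W t (q t) + ⟪f t, q t⟫)
      volume (-(k:ℝ)) k :=
    ((((continuous_const.mul ((hq'c.norm).pow 2)).add hKc).sub hWqc).add
      hipc).intervalIntegrable _ _
  have iE : IntervalIntegrable (fun t => ‖deriv q t‖ ^ 2 + ‖q t‖ ^ 2) volume (-(k:ℝ)) k :=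
    (((hq'c.norm).pow 2).add ((hqc.norm).pow 2)).intervalIntegrable _ _
  have iq2 : IntervalIntegrable (fun t => ‖q t‖ ^ 2) volume (-(k:ℝ)) k :=
    ((hqc.norm).pow 2).intervalIntegrable _ _
  have ifq : IntervalIntegrable (fun t => ‖f t‖ * ‖q t‖) volume (-(k:ℝ)) k :=
    ((hfcont.norm).mul (hqc.norm)).intervalIntegrable _ _
  have if2 : IntervalIntegrable (fun t => ‖f t‖ ^ 2) volume (-(k:ℝ)) k :=
    ((hfcont.norm).pow 2).intervalIntegrable _ _
  -- bounds on subintegrals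
  have hIq2 : (∫ t in (-(k:ℝ))..(k:ℝ), ‖q t‖ ^ 2) ≤ 1 / 2 := by
    rw [← hqnorm]
    apply intervalIntegral.integral_mono_on hle iq2 iE
    intro t _
    nlinarith [sq_nonneg ‖deriv q t‖]
  have hIq2nn : 0 ≤ (∫ t in (-(k:ℝ))..(k:ℝ), ‖q t‖ ^ 2) := by
    apply intervalIntegral.integral_nonneg hle
    intro t _; positivity
  set A : ℝ := ∫ t : ℝ, ‖f t‖ ^ 2 with hAdef
  have hA0 : 0 ≤ A := integral_nonneg fun t => sq_nonneg _
  have hfk : (∫ t in (-(k:ℝ))..(k:ℝ), ‖f t‖ ^ 2) ≤ A := by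
    rw [intervalIntegral.integral_of_le hle]
    exact setIntegral_le_integral hfsq (Filter.Eventually.of_forall fun t => sq_nonneg _)
  -- Cauchy–Schwarz-type bound
  have hfq : (∫ t in (-(k:ℝ))..(k:ℝ), ‖f t‖ * ‖q t‖) ≤ Real.sqrt 2 / 2 * Real.sqrt A := by
    rcases eq_or_lt_of_le hA0 with hA | hA
    · have h1 : (fun t : ℝ => ‖f t‖ ^ 2) =ᵐ[volume] 0 :=
        (integral_eq_zero_iff_of_nonneg (fun t => sq_nonneg _) hfsq).1 hA.symm
      have h2 : (fun t : ℝ => ‖f t‖ ^ 2) = 0 :=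
        (Continuous.ae_eq_iff_eq volume ((hfcont.norm).pow 2) continuous_const).1 h1
      have hf0 : ∀ t : ℝ, ‖f t‖ = 0 := by
        intro t
        have := congrFun h2 t
        simpa [pow_eq_zero_iff] using this
      have : (∫ t in (-(k:ℝ))..(k:ℝ), ‖f t‖ * ‖q t‖) = 0 := by
        simp only [hf0, zero_mul]
        simp
      rw [this]
      positivity
    · set c : ℝ := Real.sqrt (2 * A) with hcdef
      have hc : 0 < c := Real.sqrt_pos.2 (by linarith)
      have hc2 : c = Real.sqrt 2 * Real.sqrt A := Real.sqrt_mul (by norm_num) A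
      have step1 : (∫ t in (-(k:ℝ))..(k:ℝ), ‖f t‖ * ‖q t‖) ≤
          (∫ t in (-(k:ℝ))..(k:ℝ), (‖f t‖ ^ 2 / (2 * c) + c / 2 * ‖q t‖ ^ 2)) := by
        apply intervalIntegral.integral_mono_on hle ifq
          ((if2.div_const _).add (iq2.const_mul _))
        intro t _
        have hid : ‖f t‖ ^ 2 / (2 * c) + c / 2 * ‖q t‖ ^ 2 - ‖f t‖ * ‖q t‖
            = (‖f t‖ - c * ‖q t‖) ^ 2 / (2 * c) := by
          field_simp
          ring
        have hnn : 0 ≤ (‖f t‖ - c * ‖q t‖) ^ 2 / (2 * c) :=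
          div_nonneg (sq_nonneg _) (by linarith)
        linarith [hid ▸ hnn]
      have step2 : (∫ t in (-(k:ℝ))..(k:ℝ), (‖f t‖ ^ 2 / (2 * c) + c / 2 * ‖q t‖ ^ 2))
          = (∫ t in (-(k:ℝ))..(k:ℝ), ‖f t‖ ^ 2) / (2 * c)
            + c / 2 * (∫ t in (-(k:ℝ))..(k:ℝ), ‖q t‖ ^ 2) := by
        rw [intervalIntegral.integral_add (if2.div_const _) (iq2.const_mul _),
          intervalIntegral.integral_div, intervalIntegral.integral_const_mul]
      have step3 : (∫ t in (-(k:ℝ))..(k:ℝ), ‖f t‖ ^ 2) / (2 * c)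
            + c / 2 * (∫ t in (-(k:ℝ))..(k:ℝ), ‖q t‖ ^ 2) ≤ A / (2 * c) + c / 4 := by
        have h1 : (∫ t in (-(k:ℝ))..(k:ℝ), ‖f t‖ ^ 2) / (2 * c) ≤ A / (2 * c) := by
          gcongr
        nlinarith
      have step4 : A / (2 * c) + c / 4 = Real.sqrt 2 / 2 * Real.sqrt A := by
        have hsA : Real.sqrt A ^ 2 = A := Real.sq_sqrt hA0
        have hs2 : Real.sqrt 2 ^ 2 = 2 := Real.sq_sqrt (by norm_num)
        have hsApos : 0 < Real.sqrt A := Real.sqrt_pos.2 hA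
        have hs2pos : 0 < Real.sqrt 2 := Real.sqrt_pos.2 (by norm_num)
        rw [hc2]
        have h9 : A / (2 * (Real.sqrt 2 * Real.sqrt A)) = Real.sqrt 2 * Real.sqrt A / 4 := by
          rw [div_eq_div_iff (by positivity) (by norm_num)]
          linear_combination (-2 * Real.sqrt A ^ 2) * hs2 + (-4 : ℝ) * hsA
        rw [h9]; ring
      linarith
  -- pointwise lower bound
  set G : ℝ → ℝ := fun t =>
    b / 2 * (‖deriv q t‖ ^ 2 + ‖q t‖ ^ 2) - M * ‖q t‖ ^ 2 - ‖f t‖ * ‖q t‖ with hGdef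
  have iG : IntervalIntegrable G volume (-(k:ℝ)) k :=
    ((iE.const_mul _).sub (iq2.const_mul _)).sub ifq
  have hFG : (∫ t in (-(k:ℝ))..(k:ℝ), G t) ≤
      ∫ t in (-(k:ℝ))..(k:ℝ),
        ((1:ℝ)/2 * ‖deriv q t‖ ^ 2 + K t (q t) - W t (q t) + ⟪f t, q t⟫) := by
    apply intervalIntegral.integral_mono_on hle iG iF
    intro t _
    have h1 : b₁ * ‖q t‖ ^ 2 ≤ K t (q t) := (hC2 t (q t)).1
    have h2 : W t (q t) ≤ M * ‖q t‖ ^ 2 := hWb t (q t) (hqle t)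
    have h3 : -(‖f t‖ * ‖q t‖) ≤ ⟪f t, q t⟫ := by
      have := abs_real_inner_le_norm (f t) (q t)
      have := neg_abs_le ⟪f t, q t⟫
      linarith
    have h4 : 0 ≤ ‖deriv q t‖ ^ 2 := sq_nonneg _
    have h5 : 0 ≤ ‖q t‖ ^ 2 := sq_nonneg _
    simp only [hGdef]
    nlinarith
  -- compute the integral of G
  have hGint : (∫ t in (-(k:ℝ))..(k:ℝ), G t)
      = b / 2 * (1 / 2) - M * (∫ t in (-(k:ℝ))..(k:ℝ), ‖q t‖ ^ 2)
        - (∫ t in (-(k:ℝ))..(k:ℝ), ‖f t‖ * ‖q t‖) := by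
    simp only [hGdef]
    rw [intervalIntegral.integral_sub ((iE.const_mul _).sub (iq2.const_mul _)) ifq,
      intervalIntegral.integral_sub (iE.const_mul _) (iq2.const_mul _),
      intervalIntegral.integral_const_mul, intervalIntegral.integral_const_mul, hqnorm]
  -- assemble
  have hGlb : b / 4 - M / 2 - Real.sqrt 2 / 2 * Real.sqrt A ≤
      (∫ t in (-(k:ℝ))..(k:ℝ), G t) := by
    rw [hGint]
    have : M * (∫ t in (-(k:ℝ))..(k:ℝ), ‖q t‖ ^ 2) ≤ M * (1/2) := by
      apply mul_le_mul_of_nonneg_left hIq2 hMpos.le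
    linarith
  have hrpow : A ^ ((1:ℝ)/2) = Real.sqrt A := (Real.sqrt_eq_rpow A).symm
  rw [ge_iff_le]
  calc Real.sqrt 2 / 2 * (Real.sqrt 2 / 4 * (b - 2 * M) - A ^ ((1:ℝ)/2))
      = b / 4 - M / 2 - Real.sqrt 2 / 2 * Real.sqrt A := by
        rw [hrpow]
        have hs2 : Real.sqrt 2 ^ 2 = 2 := Real.sq_sqrt (by norm_num)
        linear_combination ((b - 2 * M) / 8) * hs2
    _ ≤ (∫ t in (-(k:ℝ))..(k:ℝ), G t) := hGlb
    _ ≤ _ := hFG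
end

section
/- Assume K satisfies condition (C2) with constants b₁, b₂ > 0, W satisfies conditions (C5) with exponent μ > 2 and (C6) with m := inf{W(t,q) : t ∈ ℝ, |q| = 1} > 0, and set b̄₂ := max{1, 2b₂}. Let f : ℝ → ℝⁿ be continuous and let k ∈ ℕ with k ≥ 1. Then for every ζ ∈ ℝ with ζ ≠ 0 and every nonzero continuously differentiable 2k-periodic function q : ℝ → ℝⁿ, I_k(ζq) ≤ (b̄₂ζ²/2)‖q‖²_{E_k} − m|ζ|^μ ∫_{−k}^{k}|q(t)|^μ dt + |ζ|·(∫_{−k}^{k}|f(t)|² dt)^{1/2}·‖q‖_{E_k} + 2km. -/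
open MeasureTheory Filter RealInnerProductSpace

lemma myWdiff {n : ℕ} (W : ℝ → EuclideanSpace ℝ (Fin n) → ℝ)
    (hW : ContDiff ℝ 1 (Function.uncurry W)) (t : ℝ) :
    Differentiable ℝ (W t) := by
  have : Differentiable ℝ (fun y : EuclideanSpace ℝ (Fin n) => Function.uncurry W (t, y)) :=
    (hW.differentiable one_ne_zero).comp ((differentiable_const t).prodMk differentiable_id)
  exact this

lemma myderiv {n : ℕ} (W : ℝ → EuclideanSpace ℝ (Fin n) → ℝ)
    (hW : ContDiff ℝ 1 (Function.uncurry W)) (t : ℝ)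
    (u : EuclideanSpace ℝ (Fin n)) (s : ℝ) :
    HasDerivAt (fun s : ℝ => W t (s • u)) ⟪gradient (W t) (s • u), u⟫ s := by
  have h1 : HasFDerivAt (W t)
      (InnerProductSpace.toDual ℝ _ (gradient (W t) (s • u))) (s • u) :=
    ((myWdiff W hW t) (s • u)).hasGradientAt.hasFDerivAt
  have h2 : HasDerivAt (fun s : ℝ => s • u) u s := by
    simpa using (hasDerivAt_id s).smul_const u
  simpa [InnerProductSpace.toDual_apply_apply, Function.comp_def] using h1.comp_hasDerivAt s h2

lemma myWge {n : ℕ} (W : ℝ → EuclideanSpace ℝ (Fin n) → ℝ)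
    (hW : ContDiff ℝ 1 (Function.uncurry W)) (μ : ℝ) (hμ : 2 < μ)
    (hC5 : ∀ (t : ℝ) (q : EuclideanSpace ℝ (Fin n)), q ≠ 0 →
      0 < μ * W t q ∧ μ * W t q ≤ ⟪q, gradient (W t) q⟫)
    (m : ℝ)
    (hmlb : ∀ (t : ℝ) (u : EuclideanSpace ℝ (Fin n)), ‖u‖ = 1 → m ≤ W t u)
    (t : ℝ) (x : EuclideanSpace ℝ (Fin n)) (hx : 1 ≤ ‖x‖) :
    m * ‖x‖ ^ μ ≤ W t x := by
  have hr : (0:ℝ) < ‖x‖ := lt_of_lt_of_le one_pos hx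
  set r := ‖x‖ with hrdef
  set u : EuclideanSpace ℝ (Fin n) := r⁻¹ • x with hudef
  have hu : ‖u‖ = 1 := by
    rw [hudef, norm_smul, norm_inv, Real.norm_eq_abs, abs_of_pos hr, ← hrdef,
      inv_mul_cancel₀ hr.ne']
  have hune : u ≠ 0 := by
    intro h; rw [h] at hu; simp at hu
  set φ : ℝ → ℝ := fun s => W t (s • u) * s ^ (-μ) with hφ
  have hmono : MonotoneOn φ (Set.Ici (1:ℝ)) := by
    apply monotoneOn_of_deriv_nonneg (convex_Ici 1)
    · apply ContinuousOn.mul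
      · exact (((myWdiff W hW t).continuous).comp
          (continuous_id.smul continuous_const)).continuousOn
      · apply ContinuousOn.rpow_const continuousOn_id
        intro s hs
        exact Or.inl (ne_of_gt (lt_of_lt_of_le one_pos hs))
    · intro s hs
      rw [interior_Ici] at hs
      have hs0 : (0:ℝ) < s := lt_trans one_pos hs
      exact (((myderiv W hW t u s).mul
        (Real.hasDerivAt_rpow_const (Or.inl hs0.ne'))).differentiableAt).differentiableWithinAt
    · intro s hs
      rw [interior_Ici] at hs
      have hs0 : (0:ℝ) < s := lt_trans one_pos hs
      have hder : HasDerivAt φ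
          (⟪gradient (W t) (s • u), u⟫ * s ^ (-μ)
            + W t (s • u) * (-μ * s ^ (-μ - 1))) s :=
        (myderiv W hW t u s).mul (Real.hasDerivAt_rpow_const (Or.inl hs0.ne'))
      rw [hder.deriv]
      have hne : s • u ≠ 0 := smul_ne_zero hs0.ne' hune
      obtain ⟨hpos, hineq⟩ := hC5 t (s • u) hne
      rw [real_inner_smul_left, real_inner_comm] at hineq
      have e1 : s ^ (-μ) = s * s ^ (-μ - 1) := by
        have h := Real.rpow_add hs0 1 (-μ - 1)
        rw [Real.rpow_one] at h
        rw [show (1:ℝ) + (-μ - 1) = -μ by ring] at h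
        exact h
      have e2 : (0:ℝ) < s ^ (-μ - 1) := Real.rpow_pos_of_pos hs0 _
      have := mul_le_mul_of_nonneg_right hineq e2.le
      nlinarith [this, e1]
  have h1 : φ 1 ≤ φ r := hmono (by exact Set.self_mem_Ici) hx hx
  have hru : r • u = x := by
    rw [hudef, smul_smul, mul_inv_cancel₀ hr.ne', one_smul]
  have hφ1 : φ 1 = W t u := by simp [hφ]
  have hφr : φ r = W t x * r ^ (-μ) := by simp only [hφ]; rw [hru]
  have hmu : m ≤ W t x * r ^ (-μ) := by
    calc m ≤ W t u := hmlb t u hu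
    _ = φ 1 := hφ1.symm
    _ ≤ φ r := h1
    _ = W t x * r ^ (-μ) := hφr
  have hrpow : (0:ℝ) < r ^ μ := Real.rpow_pos_of_pos hr _
  have := mul_le_mul_of_nonneg_right hmu hrpow.le
  have e3 : r ^ (-μ) * r ^ μ = 1 := by
    rw [← Real.rpow_add hr]; simp
  calc m * r ^ μ ≤ W t x * r ^ (-μ) * r ^ μ := this
  _ = W t x * (r ^ (-μ) * r ^ μ) := by ring
  _ = W t x := by rw [e3, mul_one]

lemma myWnonneg {n : ℕ} (W : ℝ → EuclideanSpace ℝ (Fin n) → ℝ)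
    (hW : ContDiff ℝ 1 (Function.uncurry W)) (μ : ℝ) (hμ0 : 0 < μ)
    (hC5 : ∀ (t : ℝ) (q : EuclideanSpace ℝ (Fin n)), q ≠ 0 →
      0 < μ * W t q ∧ μ * W t q ≤ ⟪q, gradient (W t) q⟫)
    (u₀ : EuclideanSpace ℝ (Fin n)) (hu₀ : u₀ ≠ 0)
    (t : ℝ) (x : EuclideanSpace ℝ (Fin n)) : 0 ≤ W t x := by
  rcases eq_or_ne x 0 with h | h
  · subst h
    have hcont : Continuous (fun s : ℝ => W t (s • u₀)) :=
      ((myWdiff W hW t).continuous).comp (continuous_id.smul continuous_const)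
    have h0 : (fun s : ℝ => W t (s • u₀)) 0 = W t 0 := by simp
    have htend : Filter.Tendsto (fun s : ℝ => W t (s • u₀)) (nhdsWithin 0 (Set.Ioi 0))
        (nhds (W t 0)) := by
      rw [← h0]
      exact (hcont.tendsto 0).mono_left nhdsWithin_le_nhds
    apply ge_of_tendsto htend
    filter_upwards [self_mem_nhdsWithin] with s hs
    have hne : s • u₀ ≠ 0 := smul_ne_zero (ne_of_gt hs) hu₀
    nlinarith [(hC5 t _ hne).1]
  · nlinarith [(hC5 t x h).1]

lemma myWbound {n : ℕ} (W : ℝ → EuclideanSpace ℝ (Fin n) → ℝ)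
    (hW : ContDiff ℝ 1 (Function.uncurry W)) (μ : ℝ) (hμ : 2 < μ)
    (hC5 : ∀ (t : ℝ) (q : EuclideanSpace ℝ (Fin n)), q ≠ 0 →
      0 < μ * W t q ∧ μ * W t q ≤ ⟪q, gradient (W t) q⟫)
    (m : ℝ) (hm0 : 0 < m)
    (hmlb : ∀ (t : ℝ) (u : EuclideanSpace ℝ (Fin n)), ‖u‖ = 1 → m ≤ W t u)
    (u₀ : EuclideanSpace ℝ (Fin n)) (hu₀ : u₀ ≠ 0)
    (t : ℝ) (x : EuclideanSpace ℝ (Fin n)) :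
    -(W t x) ≤ -(m * ‖x‖ ^ μ) + m := by
  rcases le_or_gt 1 ‖x‖ with h | h
  · have := myWge W hW μ hμ hC5 m hmlb t x h
    linarith
  · have h1 : ‖x‖ ^ μ ≤ 1 := Real.rpow_le_one (norm_nonneg x) h.le (by linarith)
    have h2 := myWnonneg W hW μ (by linarith) hC5 u₀ hu₀ t x
    nlinarith

lemma myCS (a b : ℝ) (hab : a ≤ b) (F G : ℝ → ℝ) (hF : Continuous F) (hG : Continuous G)
    (hFnn : ∀ x, 0 ≤ F x) (hGnn : ∀ x, 0 ≤ G x) :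
    ∫ t in a..b, F t * G t ≤
      (∫ t in a..b, F t ^ 2) ^ ((1:ℝ)/2) * (∫ t in a..b, G t ^ 2) ^ ((1:ℝ)/2) := by
  rw [intervalIntegral.integral_of_le hab, intervalIntegral.integral_of_le hab,
    intervalIntegral.integral_of_le hab]
  set μr := MeasureTheory.volume.restrict (Set.Ioc a b) with hμr
  haveI : IsFiniteMeasure μr := ⟨by
    rw [hμr, Measure.restrict_apply_univ]
    exact measure_Ioc_lt_top⟩
  have hmem : ∀ (H : ℝ → ℝ), Continuous H → MemLp H (ENNReal.ofReal 2) μr := by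
    intro H hH
    obtain ⟨C, hC⟩ := (isCompact_Icc (a := a) (b := b)).exists_bound_of_continuousOn
      hH.continuousOn
    refine MemLp.of_bound hH.aestronglyMeasurable C ?_
    filter_upwards [ae_restrict_mem measurableSet_Ioc] with x hx
    exact hC x (Set.Ioc_subset_Icc_self hx)
  have h := MeasureTheory.integral_mul_le_Lp_mul_Lq_of_nonneg
    (μ := μr) (p := 2) (q := 2) Real.HolderConjugate.two_two
    (Filter.Eventually.of_forall hFnn) (Filter.Eventually.of_forall hGnn)
    (hmem F hF) (hmem G hG)
  simpa [Real.rpow_two] using h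



set_option maxHeartbeats 1000000


/-- **estimate (12) of the paper.** Under (C2), (C5), (C6), with
`b̄₂ := max 1 (2 b₂)`, for every `ζ ≠ 0` and every nonzero `C¹`, `2k`-periodic `q`,
`I_k(ζq) ≤ (b̄₂ ζ²/2) ‖q‖²_{E_k} - m |ζ|^μ ∫ |q|^μ + |ζ| ‖f‖_{L²(-k,k)} ‖q‖_{E_k} + 2km`. -/
theorem stmt7 {n : ℕ}
    (K W : ℝ → EuclideanSpace ℝ (Fin n) → ℝ)
    (hKsmooth : ContDiff ℝ 1 (Function.uncurry K))
    (hWsmooth : ContDiff ℝ 1 (Function.uncurry W))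
    (b₁ b₂ : ℝ) (hb₁ : 0 < b₁) (hb₂ : 0 < b₂)
    (hC2 : ∀ (t : ℝ) (q : EuclideanSpace ℝ (Fin n)),
      b₁ * ‖q‖ ^ 2 ≤ K t q ∧ K t q ≤ b₂ * ‖q‖ ^ 2)
    (μ : ℝ) (hμ : 2 < μ)
    (hC5 : ∀ (t : ℝ) (q : EuclideanSpace ℝ (Fin n)), q ≠ 0 →
      0 < μ * W t q ∧ μ * W t q ≤ ⟪q, gradient (W t) q⟫)
    (m : ℝ)
    (hm : IsGLB {y : ℝ | ∃ (t : ℝ) (q : EuclideanSpace ℝ (Fin n)), ‖q‖ = 1 ∧ y = W t q} m)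
    (hm0 : 0 < m)
    (f : ℝ → EuclideanSpace ℝ (Fin n)) (hfcont : Continuous f)
    (k : ℕ) (hk : 1 ≤ k)
    (ζ : ℝ) (hζ : ζ ≠ 0)
    (q : ℝ → EuclideanSpace ℝ (Fin n)) (hqne : q ≠ 0)
    (hq : ContDiff ℝ 1 q) (hqper : Function.Periodic q (2 * k)) :
    (∫ t in (-(k:ℝ))..(k:ℝ),
        ((1:ℝ)/2 * ‖deriv (fun s => ζ • q s) t‖ ^ 2 + K t (ζ • q t) - W t (ζ • q t) +
          ⟪f t, ζ • q t⟫)) ≤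
      max 1 (2 * b₂) * ζ ^ 2 / 2 *
          (∫ t in (-(k:ℝ))..(k:ℝ), (‖deriv q t‖ ^ 2 + ‖q t‖ ^ 2))
        - (m * |ζ| ^ μ * ∫ t in (-(k:ℝ))..(k:ℝ), ‖q t‖ ^ μ)
        + |ζ| * (∫ t in (-(k:ℝ))..(k:ℝ), ‖f t‖ ^ 2) ^ ((1:ℝ)/2) *
            (∫ t in (-(k:ℝ))..(k:ℝ), (‖deriv q t‖ ^ 2 + ‖q t‖ ^ 2)) ^ ((1:ℝ)/2)
        + 2 * k * m := by
  classical
  by_cases hn : n = 0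
  · exfalso
    apply hqne
    subst hn
    funext t
    exact Subsingleton.elim _ _
  have hn1 : 0 < n := Nat.pos_of_ne_zero hn
  set e₀ : EuclideanSpace ℝ (Fin n) := EuclideanSpace.single ⟨0, hn1⟩ 1 with he₀def
  have he₀norm : ‖e₀‖ = 1 := by
    rw [he₀def, EuclideanSpace.norm_single]; norm_num
  have he₀ : e₀ ≠ 0 := by
    intro h; rw [h] at he₀norm; simp at he₀norm
  have hμ0 : (0:ℝ) < μ := by linarith
  have hmlb : ∀ (t : ℝ) (u : EuclideanSpace ℝ (Fin n)), ‖u‖ = 1 → m ≤ W t u :=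
    fun t u hu => hm.1 ⟨t, u, hu, rfl⟩
  have hWbd := fun t x => myWbound W hWsmooth μ hμ hC5 m hm0 hmlb e₀ he₀ t x
  -- notation
  set a : ℝ := -(k:ℝ) with hadef
  set b : ℝ := (k:ℝ) with hbdef
  have hk1 : (1:ℝ) ≤ (k:ℝ) := by exact_mod_cast hk
  have hab : a ≤ b := by rw [hadef, hbdef]; linarith
  set c : ℝ := max 1 (2 * b₂) * ζ ^ 2 / 2 with hcdef
  -- continuity facts
  have hqc : Continuous q := hq.continuous
  have hq'c : Continuous (deriv q) := hq.continuous_deriv le_rfl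
  have hqd : Differentiable ℝ q := hq.differentiable one_ne_zero
  have hKc : Continuous fun t : ℝ => K t (ζ • q t) := by
    have : Continuous fun t : ℝ => Function.uncurry K (t, ζ • q t) :=
      hKsmooth.continuous.comp (continuous_id.prodMk (hqc.const_smul ζ))
    exact this
  have hWc : Continuous fun t : ℝ => W t (ζ • q t) := by
    have : Continuous fun t : ℝ => Function.uncurry W (t, ζ • q t) :=
      hWsmooth.continuous.comp (continuous_id.prodMk (hqc.const_smul ζ))
    exact this
  have hinnc : Continuous fun t : ℝ => ⟪f t, ζ • q t⟫ :=
    hfcont.inner (hqc.const_smul ζ)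
  have hder : ∀ t : ℝ, deriv (fun s => ζ • q s) t = ζ • deriv q t :=
    fun t => deriv_const_smul ζ (hqd t)
  have hderc : Continuous (deriv fun s => ζ • q s) := by
    have : (deriv fun s => ζ • q s) = fun t => ζ • deriv q t := funext hder
    rw [this]
    exact hq'c.const_smul ζ
  have hLHSc : Continuous (fun t =>
      (1:ℝ)/2 * ‖deriv (fun s => ζ • q s) t‖ ^ 2 + K t (ζ • q t) - W t (ζ • q t) +
        ⟪f t, ζ • q t⟫) :=
    (((continuous_const.mul (hderc.norm.pow 2)).add hKc).sub hWc).add hinnc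
  -- component functions of the upper bound
  set g₁ : ℝ → ℝ := fun t => ‖deriv q t‖ ^ 2 + ‖q t‖ ^ 2 with hg₁
  set g₂ : ℝ → ℝ := fun t => ‖q t‖ ^ μ with hg₂
  set g₃ : ℝ → ℝ := fun t => ‖f t‖ * ‖q t‖ with hg₃
  have hg₁c : Continuous g₁ := (hq'c.norm.pow 2).add (hqc.norm.pow 2)
  have hg₂c : Continuous g₂ := hqc.norm.rpow_const (fun t => Or.inr hμ0.le)
  have hg₃c : Continuous g₃ := hfcont.norm.mul hqc.norm
  have hGc : Continuous (fun t => c * g₁ t - m * |ζ| ^ μ * g₂ t + |ζ| * g₃ t + m) :=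
    (((continuous_const.mul hg₁c).sub (continuous_const.mul hg₂c)).add
      (continuous_const.mul hg₃c)).add continuous_const
  -- pointwise bound
  have hpt : ∀ t ∈ Set.Icc a b,
      (1:ℝ)/2 * ‖deriv (fun s => ζ • q s) t‖ ^ 2 + K t (ζ • q t) - W t (ζ • q t) +
        ⟪f t, ζ • q t⟫ ≤ c * g₁ t - m * |ζ| ^ μ * g₂ t + |ζ| * g₃ t + m := by
    intro t _
    have h1 : ‖deriv (fun s => ζ • q s) t‖ ^ 2 = ζ ^ 2 * ‖deriv q t‖ ^ 2 := by
      rw [hder t, norm_smul, Real.norm_eq_abs, mul_pow, sq_abs]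
    have hK : K t (ζ • q t) ≤ b₂ * (ζ ^ 2 * ‖q t‖ ^ 2) := by
      have h := (hC2 t (ζ • q t)).2
      rwa [norm_smul, Real.norm_eq_abs, mul_pow, sq_abs] at h
    have hW1 : -(W t (ζ • q t)) ≤ -(m * |ζ| ^ μ * ‖q t‖ ^ μ) + m := by
      have h := hWbd t (ζ • q t)
      rw [norm_smul, Real.norm_eq_abs, Real.mul_rpow (abs_nonneg ζ) (norm_nonneg _),
        ← mul_assoc] at h
      exact h
    have hf1 : ⟪f t, ζ • q t⟫ ≤ |ζ| * (‖f t‖ * ‖q t‖) := by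
      rw [real_inner_smul_right]
      calc ζ * ⟪f t, q t⟫ ≤ |ζ * ⟪f t, q t⟫| := le_abs_self _
      _ = |ζ| * |⟪f t, q t⟫| := abs_mul _ _
      _ ≤ |ζ| * (‖f t‖ * ‖q t‖) :=
        mul_le_mul_of_nonneg_left (abs_real_inner_le_norm _ _) (abs_nonneg ζ)
    have hc1 : (1:ℝ)/2 * ζ ^ 2 ≤ c := by
      have h := le_max_left (1:ℝ) (2 * b₂)
      rw [hcdef]
      nlinarith [sq_nonneg ζ]
    have hc2 : b₂ * ζ ^ 2 ≤ c := by
      have h := le_max_right (1:ℝ) (2 * b₂)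
      rw [hcdef]
      nlinarith [sq_nonneg ζ]
    have t1 := mul_le_mul_of_nonneg_right hc1 (sq_nonneg ‖deriv q t‖)
    have t2 := mul_le_mul_of_nonneg_right hc2 (sq_nonneg ‖q t‖)
    simp only [hg₁, hg₂, hg₃]
    rw [h1]
    linarith [t1, t2, hK, hW1, hf1]
  -- integrability
  have hiL : IntervalIntegrable (fun t =>
      (1:ℝ)/2 * ‖deriv (fun s => ζ • q s) t‖ ^ 2 + K t (ζ • q t) - W t (ζ • q t) +
        ⟪f t, ζ • q t⟫) volume a b := hLHSc.intervalIntegrable a b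
  have hi1 : IntervalIntegrable (fun t => c * g₁ t) volume a b :=
    (continuous_const.mul hg₁c).intervalIntegrable a b
  have hi2 : IntervalIntegrable (fun t => m * |ζ| ^ μ * g₂ t) volume a b :=
    (continuous_const.mul hg₂c).intervalIntegrable a b
  have hi3 : IntervalIntegrable (fun t => |ζ| * g₃ t) volume a b :=
    (continuous_const.mul hg₃c).intervalIntegrable a b
  have hi4 : IntervalIntegrable (fun _ : ℝ => m) volume a b :=
    intervalIntegrable_const
  -- integral comparison
  have hmono := intervalIntegral.integral_mono_on hab hiL
    (hGc.intervalIntegrable a b) hpt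
  -- compute the integral of the bound
  have hsplit : (∫ t in a..b, (c * g₁ t - m * |ζ| ^ μ * g₂ t + |ζ| * g₃ t + m)) =
      c * (∫ t in a..b, g₁ t) - m * |ζ| ^ μ * (∫ t in a..b, g₂ t)
        + |ζ| * (∫ t in a..b, g₃ t) + 2 * k * m := by
    rw [intervalIntegral.integral_add (((hi1.sub hi2)).add hi3) hi4,
      intervalIntegral.integral_add (hi1.sub hi2) hi3,
      intervalIntegral.integral_sub hi1 hi2,
      intervalIntegral.integral_const_mul, intervalIntegral.integral_const_mul,
      intervalIntegral.integral_const_mul, intervalIntegral.integral_const]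
    rw [hadef, hbdef]
    rw [smul_eq_mul]
    ring
  -- Cauchy-Schwarz
  have hCS : (∫ t in a..b, g₃ t) ≤
      (∫ t in a..b, ‖f t‖ ^ 2) ^ ((1:ℝ)/2) * (∫ t in a..b, ‖q t‖ ^ 2) ^ ((1:ℝ)/2) :=
    myCS a b hab _ _ hfcont.norm hqc.norm (fun x => norm_nonneg _) (fun x => norm_nonneg _)
  have hqle : (∫ t in a..b, ‖q t‖ ^ 2) ^ ((1:ℝ)/2) ≤ (∫ t in a..b, g₁ t) ^ ((1:ℝ)/2) := by
    apply Real.rpow_le_rpow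
    · exact intervalIntegral.integral_nonneg hab (fun t _ => sq_nonneg _)
    · apply intervalIntegral.integral_mono_on hab
        ((hqc.norm.pow 2).intervalIntegrable a b) (hg₁c.intervalIntegrable a b)
      intro t _
      simp only [hg₁, Pi.pow_apply]
      nlinarith [sq_nonneg ‖deriv q t‖]
    · norm_num
  have hfint_nn : (0:ℝ) ≤ (∫ t in a..b, ‖f t‖ ^ 2) ^ ((1:ℝ)/2) :=
    Real.rpow_nonneg (intervalIntegral.integral_nonneg hab (fun t _ => sq_nonneg _)) _
  have hCS2 : |ζ| * (∫ t in a..b, g₃ t) ≤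
      |ζ| * ((∫ t in a..b, ‖f t‖ ^ 2) ^ ((1:ℝ)/2) * (∫ t in a..b, g₁ t) ^ ((1:ℝ)/2)) := by
    apply mul_le_mul_of_nonneg_left _ (abs_nonneg ζ)
    calc (∫ t in a..b, g₃ t) ≤
        (∫ t in a..b, ‖f t‖ ^ 2) ^ ((1:ℝ)/2) * (∫ t in a..b, ‖q t‖ ^ 2) ^ ((1:ℝ)/2) := hCS
    _ ≤ (∫ t in a..b, ‖f t‖ ^ 2) ^ ((1:ℝ)/2) * (∫ t in a..b, g₁ t) ^ ((1:ℝ)/2) :=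
        mul_le_mul_of_nonneg_left hqle hfint_nn
  rw [hsplit] at hmono
  calc (∫ t in a..b,
        ((1:ℝ)/2 * ‖deriv (fun s => ζ • q s) t‖ ^ 2 + K t (ζ • q t) - W t (ζ • q t) +
          ⟪f t, ζ • q t⟫)) ≤
      c * (∫ t in a..b, g₁ t) - m * |ζ| ^ μ * (∫ t in a..b, g₂ t)
        + |ζ| * (∫ t in a..b, g₃ t) + 2 * k * m := hmono
  _ ≤ c * (∫ t in a..b, g₁ t) - m * |ζ| ^ μ * (∫ t in a..b, g₂ t)
        + |ζ| * ((∫ t in a..b, ‖f t‖ ^ 2) ^ ((1:ℝ)/2) * (∫ t in a..b, g₁ t) ^ ((1:ℝ)/2))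
        + 2 * k * m := by linarith
  _ = c * (∫ t in a..b, g₁ t) - m * |ζ| ^ μ * (∫ t in a..b, g₂ t)
        + |ζ| * (∫ t in a..b, ‖f t‖ ^ 2) ^ ((1:ℝ)/2) * (∫ t in a..b, g₁ t) ^ ((1:ℝ)/2)
        + 2 * k * m := by ring
end

section
/- Assume K satisfies condition (C2) with constants b₁, b₂ > 0, W satisfies conditions (C5) with exponent μ > 2 and (C6) with m := inf{W(t,q) : t ∈ ℝ, |q| = 1} > 0. Let f : ℝ → ℝⁿ be continuous, let k ∈ ℕ with k ≥ 1, and let q : ℝ → ℝⁿ be a nonzero continuously differentiable 2k-periodic function. Then I_k(ζq) → −∞ as ζ → +∞; in particular, for every ρ > 0 there exists ζ > 0 such that ‖ζq‖_{E_k} > ρ and I_k(ζq) < 0. -/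
open MeasureTheory Filter RealInnerProductSpace

private lemma diffAt_snd {n : ℕ} {W : ℝ → EuclideanSpace ℝ (Fin n) → ℝ}
    (hW : ContDiff ℝ 1 (Function.uncurry W)) (t : ℝ) (x : EuclideanSpace ℝ (Fin n)) :
    DifferentiableAt ℝ (W t) x :=
  (hW.differentiable one_ne_zero (t, x)).comp x
    ((differentiableAt_const t).prodMk differentiableAt_id)

private lemma cont_snd {n : ℕ} {W : ℝ → EuclideanSpace ℝ (Fin n) → ℝ}
    (hW : ContDiff ℝ 1 (Function.uncurry W)) (t : ℝ) :
    Continuous (W t) :=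
  hW.continuous.comp (Continuous.prodMk_right t)

private lemma growth {n : ℕ} {W : ℝ → EuclideanSpace ℝ (Fin n) → ℝ}
    (hW : ContDiff ℝ 1 (Function.uncurry W))
    {μ : ℝ} (hμ : 2 < μ)
    (hC5 : ∀ (t : ℝ) (y : EuclideanSpace ℝ (Fin n)), y ≠ 0 →
      0 < μ * W t y ∧ μ * W t y ≤ ⟪y, gradient (W t) y⟫)
    {m : ℝ}
    (hm : IsGLB {y : ℝ | ∃ (t : ℝ) (x : EuclideanSpace ℝ (Fin n)), ‖x‖ = 1 ∧ y = W t x} m)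
    (t : ℝ) (x : EuclideanSpace ℝ (Fin n)) (hx : 1 ≤ ‖x‖) :
    m * ‖x‖ ^ μ ≤ W t x := by
  have hμ0 : 0 < μ := by linarith
  have hxpos : (0:ℝ) < ‖x‖ := by linarith
  set u : EuclideanSpace ℝ (Fin n) := ‖x‖⁻¹ • x with hu_def
  have hu : ‖u‖ = 1 := by
    rw [hu_def, norm_smul, norm_inv, norm_norm, inv_mul_cancel₀ hxpos.ne']
  have hune : u ≠ 0 := by
    intro h; rw [h, norm_zero] at hu; norm_num at hu
  set g : ℝ → ℝ := fun s => W t (s • u) with hg_def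
  set h : ℝ → ℝ := fun s => g s * s ^ (-μ) with hh_def
  -- derivative of g
  have hgderiv : ∀ s : ℝ, HasDerivAt g ⟪gradient (W t) (s • u), u⟫ s := by
    intro s
    have h1 : HasDerivAt (fun s : ℝ => s • u) u s := by
      simpa using (hasDerivAt_id s).smul_const u
    have h2 := (diffAt_snd hW t (s • u)).hasGradientAt.hasFDerivAt
    have h3 : HasDerivAt g _ s := h2.comp_hasDerivAt s h1
    simpa [InnerProductSpace.toDual_apply_apply] using h3
  have hhderiv : ∀ s : ℝ, 0 < s → HasDerivAt h
      (⟪gradient (W t) (s • u), u⟫ * s ^ (-μ) + g s * (-μ * s ^ (-μ - 1))) s := by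
    intro s hs
    exact (hgderiv s).mul (Real.hasDerivAt_rpow_const (Or.inl hs.ne'))
  have hderiv_nonneg : ∀ s : ℝ, 0 < s → 1 ≤ s →
      0 ≤ ⟪gradient (W t) (s • u), u⟫ * s ^ (-μ) + g s * (-μ * s ^ (-μ - 1)) := by
    intro s hs _
    have hsu : s • u ≠ 0 := smul_ne_zero hs.ne' hune
    obtain ⟨hW1, hW2⟩ := hC5 t (s • u) hsu
    have hinner : ⟪s • u, gradient (W t) (s • u)⟫ = s * ⟪gradient (W t) (s • u), u⟫ := by
      rw [real_inner_smul_left, real_inner_comm]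
    rw [hinner] at hW2
    have hgs : μ * g s ≤ s * ⟪gradient (W t) (s • u), u⟫ := hW2
    have hrpos : (0:ℝ) < s ^ (-μ - 1) := Real.rpow_pos_of_pos hs _
    have hsplit : s ^ (-μ) = s * s ^ (-μ - 1) := by
      rw [show -μ - 1 = -μ + (-1) by ring, Real.rpow_add hs, Real.rpow_neg_one]
      field_simp
    have : μ * g s * s ^ (-μ - 1) ≤ s * ⟪gradient (W t) (s • u), u⟫ * s ^ (-μ - 1) :=
      mul_le_mul_of_nonneg_right hgs hrpos.le
    calc (0:ℝ) = μ * g s * s ^ (-μ - 1) + g s * (-μ * s ^ (-μ - 1)) := by ring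
      _ ≤ s * ⟪gradient (W t) (s • u), u⟫ * s ^ (-μ - 1) + g s * (-μ * s ^ (-μ - 1)) := by
          linarith
      _ = ⟪gradient (W t) (s • u), u⟫ * s ^ (-μ) + g s * (-μ * s ^ (-μ - 1)) := by
          rw [hsplit]; ring
  -- h monotone on Ici 1
  have hmono : MonotoneOn h (Set.Ici (1:ℝ)) := by
    apply monotoneOn_of_deriv_nonneg (convex_Ici 1)
    · intro s hs
      have : (0:ℝ) < s := lt_of_lt_of_le one_pos hs
      exact ((hhderiv s this).continuousAt).continuousWithinAt
    · intro s hs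
      rw [interior_Ici] at hs
      exact ((hhderiv s (lt_trans one_pos hs)).differentiableAt).differentiableWithinAt
    · intro s hs
      rw [interior_Ici] at hs
      have hs0 : (0:ℝ) < s := lt_trans one_pos hs
      rw [(hhderiv s hs0).deriv]
      exact hderiv_nonneg s hs0 hs.le
  have hmh : m ≤ h 1 := by
    have : W t u ∈ {y : ℝ | ∃ (t : ℝ) (x : EuclideanSpace ℝ (Fin n)), ‖x‖ = 1 ∧ y = W t x} :=
      ⟨t, u, hu, rfl⟩
    have hm1 := hm.1 this
    simp only [hh_def, hg_def, one_smul, Real.one_rpow, mul_one]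
    exact hm1
  have hle : h 1 ≤ h ‖x‖ := hmono (Set.mem_Ici.mpr le_rfl) (Set.mem_Ici.mpr hx) hx
  have hxu : ‖x‖ • u = x := by
    rw [hu_def, smul_smul, mul_inv_cancel₀ hxpos.ne', one_smul]
  have hfin : m ≤ W t x * ‖x‖ ^ (-μ) := by
    have : h ‖x‖ = W t x * ‖x‖ ^ (-μ) := by
      simp only [hh_def, hg_def, hxu]
    linarith [le_trans hmh hle, this ▸ le_trans hmh hle]
  have hcancel : ‖x‖ ^ (-μ) * ‖x‖ ^ μ = 1 := by
    rw [← Real.rpow_add hxpos]; simp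
  have hμpow : (0:ℝ) < ‖x‖ ^ μ := Real.rpow_pos_of_pos hxpos _
  calc m * ‖x‖ ^ μ ≤ (W t x * ‖x‖ ^ (-μ)) * ‖x‖ ^ μ :=
        mul_le_mul_of_nonneg_right hfin hμpow.le
    _ = W t x := by rw [mul_assoc, hcancel, mul_one]

private lemma Wnonneg {n : ℕ} {W : ℝ → EuclideanSpace ℝ (Fin n) → ℝ}
    (hW : ContDiff ℝ 1 (Function.uncurry W))
    {μ : ℝ} (hμ : 2 < μ)
    (hC5 : ∀ (t : ℝ) (y : EuclideanSpace ℝ (Fin n)), y ≠ 0 →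
      0 < μ * W t y ∧ μ * W t y ≤ ⟪y, gradient (W t) y⟫)
    (u : EuclideanSpace ℝ (Fin n)) (hu : u ≠ 0)
    (t : ℝ) (x : EuclideanSpace ℝ (Fin n)) : 0 ≤ W t x := by
  have hμ0 : (0:ℝ) < μ := by linarith
  have hpos : ∀ y : EuclideanSpace ℝ (Fin n), y ≠ 0 → 0 < W t y := by
    intro y hy
    have h1 := (hC5 t y hy).1
    nlinarith [h1, hμ0]
  rcases eq_or_ne x 0 with rfl | hx
  · have hc : Tendsto (fun s : ℝ => W t (s • u)) (nhdsWithin 0 (Set.Ioi 0)) (nhds (W t 0)) := by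
      have : ContinuousAt (fun s : ℝ => W t (s • u)) 0 := by
        exact ((cont_snd hW t).comp (continuous_id.smul continuous_const)).continuousAt
      simpa using this.continuousWithinAt.tendsto
    refine ge_of_tendsto hc ?_
    filter_upwards [self_mem_nhdsWithin] with s hs
    exact (hpos _ (smul_ne_zero (ne_of_gt hs) hu)).le
  · exact (hpos x hx).le

private lemma poly_tendsto {C₁ C₂ C₃ μ : ℝ} (hμ : 2 < μ) (hC₃ : 0 < C₃) :
    Tendsto (fun ζ : ℝ => C₁ * ζ ^ 2 + C₂ * ζ - C₃ * ζ ^ μ) atTop atBot := by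
  have h1 : Tendsto (fun ζ : ℝ => ζ ^ μ) atTop atTop := tendsto_rpow_atTop (by linarith)
  have h2 : Tendsto (fun ζ : ℝ => C₁ * ζ ^ (2 - μ) + C₂ * ζ ^ (1 - μ) - C₃) atTop
      (nhds (-C₃)) := by
    have a1 : Tendsto (fun ζ : ℝ => ζ ^ (2 - μ)) atTop (nhds 0) := by
      have := tendsto_rpow_neg_atTop (y := μ - 2) (by linarith)
      simpa [neg_sub] using this
    have a2 : Tendsto (fun ζ : ℝ => ζ ^ (1 - μ)) atTop (nhds 0) := by
      have := tendsto_rpow_neg_atTop (y := μ - 1) (by linarith)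
      simpa [neg_sub] using this
    have := ((a1.const_mul C₁).add (a2.const_mul C₂)).sub_const C₃
    simpa using this
  have h3 := h1.atTop_mul_neg (by linarith : -C₃ < 0) h2
  apply h3.congr'
  filter_upwards [eventually_gt_atTop (0:ℝ)] with ζ hζ
  have e1 : ζ ^ μ * ζ ^ (2 - μ) = ζ ^ 2 := by
    rw [← Real.rpow_add hζ, ← Real.rpow_natCast ζ 2]
    norm_num
  have e2 : ζ ^ μ * ζ ^ (1 - μ) = ζ := by
    rw [← Real.rpow_add hζ]
    norm_num
  calc ζ ^ μ * (C₁ * ζ ^ (2 - μ) + C₂ * ζ ^ (1 - μ) - C₃)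
      = C₁ * (ζ ^ μ * ζ ^ (2 - μ)) + C₂ * (ζ ^ μ * ζ ^ (1 - μ)) - C₃ * ζ ^ μ := by ring
    _ = C₁ * ζ ^ 2 + C₂ * ζ - C₃ * ζ ^ μ := by rw [e1, e2]

set_option maxHeartbeats 1000000 in
/-- Under (C2), (C5), (C6), for a nonzero `C¹`, `2k`-periodic `q`, one has
`I_k(ζq) → -∞` as `ζ → +∞`; in particular for every `ρ > 0` there is `ζ > 0` with
`‖ζq‖_{E_k} > ρ` and `I_k(ζq) < 0`. -/
theorem stmt8 {n : ℕ}
    (K W : ℝ → EuclideanSpace ℝ (Fin n) → ℝ)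
    (hKsmooth : ContDiff ℝ 1 (Function.uncurry K))
    (hWsmooth : ContDiff ℝ 1 (Function.uncurry W))
    (b₁ b₂ : ℝ) (hb₁ : 0 < b₁) (hb₂ : 0 < b₂)
    (hC2 : ∀ (t : ℝ) (q : EuclideanSpace ℝ (Fin n)),
      b₁ * ‖q‖ ^ 2 ≤ K t q ∧ K t q ≤ b₂ * ‖q‖ ^ 2)
    (μ : ℝ) (hμ : 2 < μ)
    (hC5 : ∀ (t : ℝ) (q : EuclideanSpace ℝ (Fin n)), q ≠ 0 →
      0 < μ * W t q ∧ μ * W t q ≤ ⟪q, gradient (W t) q⟫)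
    (m : ℝ)
    (hm : IsGLB {y : ℝ | ∃ (t : ℝ) (q : EuclideanSpace ℝ (Fin n)), ‖q‖ = 1 ∧ y = W t q} m)
    (hm0 : 0 < m)
    (f : ℝ → EuclideanSpace ℝ (Fin n)) (hfcont : Continuous f)
    (k : ℕ) (hk : 1 ≤ k)
    (q : ℝ → EuclideanSpace ℝ (Fin n)) (hqne : q ≠ 0)
    (hq : ContDiff ℝ 1 q) (hqper : Function.Periodic q (2 * k)) :
    Tendsto (fun ζ : ℝ => ∫ t in (-(k:ℝ))..(k:ℝ),
        ((1:ℝ)/2 * ‖deriv (fun s => ζ • q s) t‖ ^ 2 + K t (ζ • q t) - W t (ζ • q t) +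
          ⟪f t, ζ • q t⟫)) atTop atBot ∧
    ∀ ρ > (0:ℝ), ∃ ζ > (0:ℝ),
      (∫ t in (-(k:ℝ))..(k:ℝ),
          (‖deriv (fun s => ζ • q s) t‖ ^ 2 + ‖ζ • q t‖ ^ 2)) ^ ((1:ℝ)/2) > ρ ∧
      (∫ t in (-(k:ℝ))..(k:ℝ),
          ((1:ℝ)/2 * ‖deriv (fun s => ζ • q s) t‖ ^ 2 + K t (ζ • q t) - W t (ζ • q t) +
            ⟪f t, ζ • q t⟫)) < 0 := by
  classical
  -- find t₀ with q t₀ ≠ 0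
  obtain ⟨t₀, ht₀⟩ : ∃ t, q t ≠ 0 := by
    by_contra h; push_neg at h; exact hqne (funext h)
  have hk0 : (0:ℝ) < k := by exact_mod_cast Nat.lt_of_lt_of_le Nat.zero_lt_one hk
  have h2k : (0:ℝ) < 2 * k := by linarith
  -- shift t₀ into [-k, k)
  set j : ℤ := ⌊(t₀ + k) / (2 * k)⌋ with hjdef
  set t₁ : ℝ := t₀ - j * (2 * k) with ht₁def
  have hq1 : q t₁ = q t₀ := hqper.sub_int_mul_eq j
  have ht₁ne : q t₁ ≠ 0 := by rw [hq1]; exact ht₀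
  have hA : (j:ℝ) * (2*k) ≤ t₀ + k := by
    have h := Int.floor_le ((t₀ + k) / (2 * k))
    calc (j:ℝ) * (2*k) ≤ ((t₀+k)/(2*k)) * (2*k) := mul_le_mul_of_nonneg_right h h2k.le
      _ = t₀ + k := div_mul_cancel₀ _ h2k.ne'
  have hB : t₀ + k < ((j:ℝ)+1) * (2*k) := by
    have h := Int.lt_floor_add_one ((t₀ + k) / (2 * k))
    rw [← hjdef] at h
    calc t₀ + k = ((t₀+k)/(2*k)) * (2*k) := (div_mul_cancel₀ _ h2k.ne').symm
      _ < ((j:ℝ)+1) * (2*k) := mul_lt_mul_of_pos_right h h2k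
  have ht₁low : -(k:ℝ) ≤ t₁ := by rw [ht₁def]; nlinarith
  have ht₁high : t₁ < k := by rw [ht₁def]; nlinarith
  -- ε and interval [a, b]
  set ε : ℝ := ‖q t₁‖ / 2 with hεdef
  have hqt₁ : 0 < ‖q t₁‖ := norm_pos_iff.mpr ht₁ne
  have hε : 0 < ε := by rw [hεdef]; linarith
  have hqc : Continuous q := hq.continuous
  have hq'c : Continuous (deriv q) := hq.continuous_deriv le_rfl
  have hcnhds : {t : ℝ | ε < ‖q t‖} ∈ nhds t₁ := by
    have hc : ContinuousAt (fun t => ‖q t‖) t₁ := hqc.norm.continuousAt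
    exact hc.preimage_mem_nhds (Ioi_mem_nhds (by rw [hεdef]; linarith))
  obtain ⟨η, hη, hball⟩ := Metric.mem_nhds_iff.mp hcnhds
  set a : ℝ := t₁ with hadef
  set b : ℝ := min (t₁ + η/2) k with hbdef
  have hab : a < b := lt_min (by rw [hadef]; linarith) ht₁high
  have hbk : b ≤ k := min_le_right _ _
  have hak : -(k:ℝ) ≤ a := ht₁low
  have hqlow : ∀ t ∈ Set.Icc a b, ε ≤ ‖q t‖ := by
    intro t ht
    have h1 : t₁ ≤ t := ht.1
    have h2 : t ≤ t₁ + η/2 := le_trans ht.2 (min_le_left _ _)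
    have hmem : t ∈ Metric.ball t₁ η := by
      rw [Metric.mem_ball, Real.dist_eq, abs_lt]
      constructor <;> linarith
    exact (hball hmem).le
  -- continuity facts
  have hKc : ∀ ζ : ℝ, Continuous (fun t => K t (ζ • q t)) := fun ζ =>
    hKsmooth.continuous.comp (continuous_id.prodMk (hqc.const_smul ζ))
  have hWc : ∀ ζ : ℝ, Continuous (fun t => W t (ζ • q t)) := fun ζ =>
    hWsmooth.continuous.comp (continuous_id.prodMk (hqc.const_smul ζ))
  have hderiv_eq : ∀ (ζ : ℝ) (t : ℝ), deriv (fun s => ζ • q s) t = ζ • deriv q t :=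
    fun ζ t => deriv_const_smul ζ (hq.differentiable one_ne_zero t)
  -- rewrite the action functional
  set Φ : ℝ → ℝ := fun ζ => ∫ t in (-(k:ℝ))..(k:ℝ),
      ((1:ℝ)/2 * ‖ζ • deriv q t‖ ^ 2 + K t (ζ • q t) - W t (ζ • q t) + ⟪f t, ζ • q t⟫)
    with hΦdef
  have hΦeq : ∀ ζ : ℝ, (∫ t in (-(k:ℝ))..(k:ℝ),
      ((1:ℝ)/2 * ‖deriv (fun s => ζ • q s) t‖ ^ 2 + K t (ζ • q t) - W t (ζ • q t) +
        ⟪f t, ζ • q t⟫)) = Φ ζ := by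
    intro ζ
    exact intervalIntegral.integral_congr fun t _ => by rw [hderiv_eq]
  -- constants
  set C₁ : ℝ := ∫ t in (-(k:ℝ))..(k:ℝ), ((1:ℝ)/2 * ‖deriv q t‖^2 + b₂ * ‖q t‖^2) with hC₁def
  set C₂ : ℝ := ∫ t in (-(k:ℝ))..(k:ℝ), (‖f t‖ * ‖q t‖) with hC₂def
  set C₃ : ℝ := (m * ε ^ μ) * (b - a) with hC₃def
  have hεμ : (0:ℝ) < ε ^ μ := Real.rpow_pos_of_pos hε μ
  have hC₃pos : 0 < C₃ := by
    rw [hC₃def]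
    have : (0:ℝ) < b - a := by linarith
    positivity
  have hW0 : ∀ (t : ℝ) (x : EuclideanSpace ℝ (Fin n)), 0 ≤ W t x :=
    Wnonneg hWsmooth hμ hC5 (q t₁) ht₁ne
  have hWint : ∀ (ζ c d : ℝ), IntervalIntegrable (fun t => W t (ζ • q t)) volume c d :=
    fun ζ c d => (hWc ζ).intervalIntegrable _ _
  -- the key estimate
  have hkey : ∀ ζ : ℝ, max 1 ε⁻¹ ≤ ζ → Φ ζ ≤ C₁ * ζ^2 + C₂ * ζ - C₃ * ζ ^ μ := by
    intro ζ hζ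
    have hζ1 : 1 ≤ ζ := le_trans (le_max_left _ _) hζ
    have hζ0 : (0:ℝ) < ζ := lt_of_lt_of_le one_pos hζ1
    have hζε : 1 ≤ ζ * ε := by
      have h : ε⁻¹ ≤ ζ := le_trans (le_max_right _ _) hζ
      calc (1:ℝ) = ε⁻¹ * ε := (inv_mul_cancel₀ hε.ne').symm
        _ ≤ ζ * ε := mul_le_mul_of_nonneg_right h hε.le
    have cont1 : Continuous (fun t => (1:ℝ)/2 * ‖ζ • deriv q t‖ ^ 2 + K t (ζ • q t)
        - W t (ζ • q t) + ⟪f t, ζ • q t⟫) := by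
      apply Continuous.add
      · exact ((continuous_const.mul (((hq'c.const_smul ζ)).norm.pow 2)).add
          (hKc ζ)).sub (hWc ζ)
      · exact hfcont.inner (hqc.const_smul ζ)
    have cont2a : Continuous (fun t => (1:ℝ)/2 * ‖deriv q t‖^2 + b₂ * ‖q t‖^2) := by
      exact (continuous_const.mul (hq'c.norm.pow 2)).add
        (continuous_const.mul (hqc.norm.pow 2))
    have cont2b : Continuous (fun t => ‖f t‖ * ‖q t‖) := hfcont.norm.mul hqc.norm
    have int1 : IntervalIntegrable (fun t => (1:ℝ)/2 * ‖ζ • deriv q t‖ ^ 2 + K t (ζ • q t)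
        - W t (ζ • q t) + ⟪f t, ζ • q t⟫) volume (-(k:ℝ)) k := cont1.intervalIntegrable _ _
    have int2 : IntervalIntegrable (fun t =>
        ζ^2 * ((1:ℝ)/2 * ‖deriv q t‖^2 + b₂ * ‖q t‖^2) + ζ * (‖f t‖ * ‖q t‖)
        - W t (ζ • q t)) volume (-(k:ℝ)) k := by
      exact (((continuous_const.mul cont2a).add (continuous_const.mul cont2b)).sub (hWc ζ)).intervalIntegrable _ _
    have step1 : Φ ζ ≤ ∫ t in (-(k:ℝ))..(k:ℝ),
        (ζ^2 * ((1:ℝ)/2 * ‖deriv q t‖^2 + b₂ * ‖q t‖^2) + ζ * (‖f t‖ * ‖q t‖)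
          - W t (ζ • q t)) := by
      apply intervalIntegral.integral_mono_on (by linarith : -(k:ℝ) ≤ (k:ℝ)) int1 int2
      intro t _
      have e1 : ‖ζ • deriv q t‖^2 = ζ^2 * ‖deriv q t‖^2 := by
        rw [norm_smul, mul_pow, Real.norm_eq_abs, sq_abs]
      have e2 : ‖ζ • q t‖^2 = ζ^2 * ‖q t‖^2 := by
        rw [norm_smul, mul_pow, Real.norm_eq_abs, sq_abs]
      have e5 : ‖ζ • q t‖ = ζ * ‖q t‖ := by
        rw [norm_smul, Real.norm_eq_abs, abs_of_pos hζ0]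
      have e3 : K t (ζ • q t) ≤ b₂ * (ζ^2 * ‖q t‖^2) := by
        have := (hC2 t (ζ • q t)).2; rw [e2] at this; exact this
      have e4 : ⟪f t, ζ • q t⟫ ≤ ζ * (‖f t‖ * ‖q t‖) := by
        have := real_inner_le_norm (f t) (ζ • q t)
        rw [e5] at this; linarith [this]
      rw [e1]; nlinarith [e3, e4]
    have hsplit : (∫ t in (-(k:ℝ))..(k:ℝ),
        (ζ^2 * ((1:ℝ)/2 * ‖deriv q t‖^2 + b₂ * ‖q t‖^2) + ζ * (‖f t‖ * ‖q t‖)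
          - W t (ζ • q t)))
        = ζ^2 * C₁ + ζ * C₂ - ∫ t in (-(k:ℝ))..(k:ℝ), W t (ζ • q t) := by
      rw [intervalIntegral.integral_sub (f := fun t =>
              ζ^2 * ((1:ℝ)/2 * ‖deriv q t‖^2 + b₂ * ‖q t‖^2) + ζ * (‖f t‖ * ‖q t‖))
            (((cont2a.const_mul (ζ^2)).add
            (cont2b.const_mul ζ)).intervalIntegrable _ _) (hWint ζ _ _),
        intervalIntegral.integral_add ((cont2a.const_mul (ζ^2)).intervalIntegrable _ _)
          ((cont2b.const_mul ζ).intervalIntegrable _ _),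
        intervalIntegral.integral_const_mul, intervalIntegral.integral_const_mul]
    -- bound on ∫ W
    have hWsplit : (∫ t in (-(k:ℝ))..(k:ℝ), W t (ζ • q t))
        = (∫ t in (-(k:ℝ))..a, W t (ζ • q t)) + (∫ t in a..b, W t (ζ • q t))
          + (∫ t in b..(k:ℝ), W t (ζ • q t)) := by
      rw [intervalIntegral.integral_add_adjacent_intervals (hWint ζ _ _) (hWint ζ _ _),
        intervalIntegral.integral_add_adjacent_intervals (hWint ζ _ _) (hWint ζ _ _)]
    have hn1 : 0 ≤ ∫ t in (-(k:ℝ))..a, W t (ζ • q t) :=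
      intervalIntegral.integral_nonneg hak (fun t _ => hW0 _ _)
    have hn2 : 0 ≤ ∫ t in b..(k:ℝ), W t (ζ • q t) :=
      intervalIntegral.integral_nonneg hbk (fun t _ => hW0 _ _)
    have hmid : (b - a) * (m * (ζ*ε) ^ μ) ≤ ∫ t in a..b, W t (ζ • q t) := by
      have hmono := intervalIntegral.integral_mono_on hab.le
        (intervalIntegrable_const : IntervalIntegrable (fun _ => m * (ζ*ε) ^ μ) volume a b) (hWint ζ a b) ?_
      · rw [intervalIntegral.integral_const, smul_eq_mul] at hmono
        exact hmono
      · intro t ht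
        have hq_t : ε ≤ ‖q t‖ := hqlow t ht
        have e5 : ‖ζ • q t‖ = ζ * ‖q t‖ := by
          rw [norm_smul, Real.norm_eq_abs, abs_of_pos hζ0]
        have h1 : ζ * ε ≤ ‖ζ • q t‖ := by
          rw [e5]; exact mul_le_mul_of_nonneg_left hq_t hζ0.le
        have h2 : 1 ≤ ‖ζ • q t‖ := le_trans hζε h1
        have h3 := growth hWsmooth hμ hC5 hm t (ζ • q t) h2
        have h4 : (ζ*ε) ^ μ ≤ ‖ζ • q t‖ ^ μ :=
          Real.rpow_le_rpow (by positivity) h1 (by linarith)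
        calc m * (ζ*ε) ^ μ ≤ m * ‖ζ • q t‖ ^ μ :=
              mul_le_mul_of_nonneg_left h4 hm0.le
          _ ≤ W t (ζ • q t) := h3
    have hpow : (ζ*ε) ^ μ = ζ ^ μ * ε ^ μ := Real.mul_rpow hζ0.le hε.le
    have hWfinal : C₃ * ζ ^ μ ≤ ∫ t in (-(k:ℝ))..(k:ℝ), W t (ζ • q t) := by
      have : C₃ * ζ ^ μ = (b - a) * (m * (ζ*ε) ^ μ) := by
        rw [hC₃def, hpow]; ring
      rw [this, hWsplit]; linarith
    linarith [step1, hsplit ▸ step1, hWfinal]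
  -- part 1
  have htend : Tendsto Φ atTop atBot := by
    refine tendsto_atBot_mono' atTop ?_ (poly_tendsto (C₁ := C₁) (C₂ := C₂) hμ hC₃pos)
    filter_upwards [eventually_ge_atTop (max 1 ε⁻¹)] with ζ hζ using hkey ζ hζ
  constructor
  · have : (fun ζ : ℝ => ∫ t in (-(k:ℝ))..(k:ℝ),
        ((1:ℝ)/2 * ‖deriv (fun s => ζ • q s) t‖ ^ 2 + K t (ζ • q t) - W t (ζ • q t) +
          ⟪f t, ζ • q t⟫)) = Φ := funext hΦeq
    rw [this]; exact htend
  · intro ρ hρ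
    set N : ℝ := ∫ t in (-(k:ℝ))..(k:ℝ), (‖deriv q t‖^2 + ‖q t‖^2) with hNdef
    have contN : Continuous (fun t => ‖deriv q t‖^2 + ‖q t‖^2) :=
      (hq'c.norm.pow 2).add (hqc.norm.pow 2)
    have hNint : ∀ c d : ℝ, IntervalIntegrable (fun t => ‖deriv q t‖^2 + ‖q t‖^2) volume c d :=
      fun c d => contN.intervalIntegrable _ _
    have hNnn : ∀ t : ℝ, 0 ≤ ‖deriv q t‖^2 + ‖q t‖^2 := fun t => by positivity
    have hNpos : 0 < N := by
      have hmid : (b - a) * ε^2 ≤ ∫ t in a..b, (‖deriv q t‖^2 + ‖q t‖^2) := by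
        have hmono := intervalIntegral.integral_mono_on hab.le
          (intervalIntegrable_const : IntervalIntegrable (fun _ => ε^2) volume a b) (hNint a b) ?_
        · rw [intervalIntegral.integral_const, smul_eq_mul] at hmono; exact hmono
        · intro t ht
          have h1 : ε ≤ ‖q t‖ := hqlow t ht
          nlinarith [sq_nonneg (‖deriv q t‖), h1, hε]
      have hsplit : N = (∫ t in (-(k:ℝ))..a, (‖deriv q t‖^2 + ‖q t‖^2))
          + (∫ t in a..b, (‖deriv q t‖^2 + ‖q t‖^2))
          + (∫ t in b..(k:ℝ), (‖deriv q t‖^2 + ‖q t‖^2)) := by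
        rw [hNdef, intervalIntegral.integral_add_adjacent_intervals (hNint _ _) (hNint _ _),
          intervalIntegral.integral_add_adjacent_intervals (hNint _ _) (hNint _ _)]
      have hn1 : 0 ≤ ∫ t in (-(k:ℝ))..a, (‖deriv q t‖^2 + ‖q t‖^2) :=
        intervalIntegral.integral_nonneg hak (fun t _ => hNnn t)
      have hn2 : 0 ≤ ∫ t in b..(k:ℝ), (‖deriv q t‖^2 + ‖q t‖^2) :=
        intervalIntegral.integral_nonneg hbk (fun t _ => hNnn t)
      have hba : (0:ℝ) < b - a := sub_pos.mpr hab
      have : (0:ℝ) < (b - a) * ε^2 := by positivity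
      rw [hsplit]; linarith
    have hsN : 0 < Real.sqrt N := Real.sqrt_pos.mpr hNpos
    have hneg : ∀ᶠ ζ in atTop, Φ ζ < 0 := htend.eventually (eventually_lt_atBot 0)
    obtain ⟨ζ₀, hζ₀⟩ := eventually_atTop.mp hneg
    set ζ : ℝ := max ζ₀ (ρ / Real.sqrt N + 1) with hζdef
    have hζρ : ρ / Real.sqrt N + 1 ≤ ζ := le_max_right _ _
    have hdiv : 0 < ρ / Real.sqrt N := div_pos hρ hsN
    have hζpos : 0 < ζ := by linarith
    refine ⟨ζ, hζpos, ?_, ?_⟩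
    · have heq : (∫ t in (-(k:ℝ))..(k:ℝ),
          (‖deriv (fun s => ζ • q s) t‖ ^ 2 + ‖ζ • q t‖ ^ 2)) = ζ^2 * N := by
        rw [hNdef, ← intervalIntegral.integral_const_mul]
        apply intervalIntegral.integral_congr
        intro t _
        simp only [hderiv_eq, norm_smul, Real.norm_eq_abs, mul_pow, sq_abs]
        ring
      rw [heq]
      have hpow : (ζ^2 * N) ^ ((1:ℝ)/2) = ζ * Real.sqrt N := by
        rw [← Real.sqrt_eq_rpow, Real.sqrt_mul (sq_nonneg ζ), Real.sqrt_sq hζpos.le]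
      rw [hpow]
      have hlt : ρ / Real.sqrt N < ζ := by linarith
      calc ρ = (ρ / Real.sqrt N) * Real.sqrt N := by field_simp
        _ < ζ * Real.sqrt N := mul_lt_mul_of_pos_right hlt hsN
    · rw [hΦeq ζ]
      exact hζ₀ ζ (le_max_left _ _)
end

section
/- Let f : ℝ → ℝⁿ be a non-trivial, bounded, continuous and square integrable map, and let V : ℝ × ℝⁿ → ℝ be a C¹-smooth potential whose gradient ∇_qV is uniformly bounded in t on every compact subset of ℝⁿ (for every L > 0 there is C > 0 such that |q| ≤ L implies |∇_qV(t,q)| ≤ C for all t ∈ ℝ). Suppose that for each k ∈ ℕ with k ≥ 1 there is a twice continuously differentiable 2k-periodic function q_k : ℝ → ℝⁿ satisfying q̈_k(t) + ∇_qV_k(t, q_k(t)) = f_k(t) for all t ∈ ℝ, where f_k and V_k denote the 2k-periodic extensions in t of the restrictions of f and V to [−k, k), and suppose that the sequence ∫_{−k}^{k}(|q̇_k(t)|² + |q_k(t)|²) dt is bounded. Then there is a strictly increasing sequence (k_j) of indices and a twice continuously differentiable function q : ℝ → ℝⁿ with ∫_{−∞}^{∞}(|q̇(t)|² + |q(t)|²)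 dt < ∞, such that q_{k_j}, q̇_{k_j}, q̈_{k_j} converge to q, q̇, q̈ respectively, uniformly on every compact subset of ℝ, and q̈(t) + ∇_qV(t, q(t)) = f(t) for all t ∈ ℝ. -/
open MeasureTheory Filter RealInnerProductSpace
open Topology

/-- The representative of `t` in `[-k, k)` modulo `2k`; used to form `2k`-periodic
extensions of the restriction of a function to `[-k, k)`. -/
noncomputable def projPer (k : ℝ) (t : ℝ) : ℝ := t - 2 * k * (⌊(t + k) / (2 * k)⌋ : ℝ)

section Aux
open Set


lemma ascoli_seq {n : ℕ} (R M : ℝ) (F : ℕ → ℝ → EuclideanSpace ℝ (Fin n))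
    (hcont : ∀ k, Continuous (F k))
    (hbd : ∀ k t, ‖F k t‖ ≤ R)
    (hM : 0 ≤ M) (hlip : ∀ k, LipschitzWith (Real.toNNReal M) (F k)) :
    ∃ φ : ℕ → ℕ, StrictMono φ ∧ ∃ g : ℝ → EuclideanSpace ℝ (Fin n),
      Continuous g ∧ TendstoLocallyUniformly (fun j => F (φ j)) g atTop := by
  classical
  set S : Set C(ℝ, EuclideanSpace ℝ (Fin n)) :=
    {g | (∀ t, ‖g t‖ ≤ R) ∧ LipschitzWith (Real.toNNReal M) g} with hSdef
  have h1 : IsClosed {g : ℝ → EuclideanSpace ℝ (Fin n) |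
      ∀ t, g t ∈ Metric.closedBall (0 : EuclideanSpace ℝ (Fin n)) R} := by
    have : {g : ℝ → EuclideanSpace ℝ (Fin n) |
        ∀ t, g t ∈ Metric.closedBall (0 : EuclideanSpace ℝ (Fin n)) R} =
        ⋂ t, (fun g : ℝ → EuclideanSpace ℝ (Fin n) => g t) ⁻¹'
          Metric.closedBall (0 : EuclideanSpace ℝ (Fin n)) R := by
      ext g; simp [Set.mem_iInter]
    rw [this]
    exact isClosed_iInter fun t => Metric.isClosed_closedBall.preimage (continuous_apply t)
  have h2 : IsClosed {g : ℝ → EuclideanSpace ℝ (Fin n) | LipschitzWith (Real.toNNReal M) g} := by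
    have : {g : ℝ → EuclideanSpace ℝ (Fin n) | LipschitzWith (Real.toNNReal M) g} =
        ⋂ (x : ℝ) (y : ℝ), {g : ℝ → EuclideanSpace ℝ (Fin n) |
          dist (g x) (g y) ≤ (Real.toNNReal M : ℝ) * dist x y} := by
      ext g; simp [lipschitzWith_iff_dist_le_mul, Set.mem_iInter]
    rw [this]
    exact isClosed_iInter fun x => isClosed_iInter fun y =>
      isClosed_le ((continuous_apply x).dist (continuous_apply y)) continuous_const
  have hS : IsCompact S := by
    apply ArzelaAscoli.isCompact_of_equicontinuous
    · have himg : ContinuousMap.toFun '' S =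
          {g : ℝ → EuclideanSpace ℝ (Fin n) |
            ∀ t, g t ∈ Metric.closedBall (0 : EuclideanSpace ℝ (Fin n)) R} ∩
          {g : ℝ → EuclideanSpace ℝ (Fin n) | LipschitzWith (Real.toNNReal M) g} := by
        ext g
        constructor
        · rintro ⟨g₀, ⟨hb, hl⟩, rfl⟩
          exact ⟨fun t => by simpa [Metric.mem_closedBall, dist_eq_norm] using hb t, hl⟩
        · rintro ⟨hb, hl⟩
          exact ⟨⟨g, hl.continuous⟩,
            ⟨fun t => by simpa [Metric.mem_closedBall, dist_eq_norm] using hb t, hl⟩, rfl⟩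
      rw [himg]
      apply IsCompact.of_isClosed_subset
        (isCompact_univ_pi fun t : ℝ =>
          isCompact_closedBall (0 : EuclideanSpace ℝ (Fin n)) R)
      · exact h1.inter h2
      · intro g hg t _
        exact hg.1 t
    · intro x
      rw [Metric.equicontinuousAt_iff]
      intro ε hε
      refine ⟨ε / (M + 1), by positivity, fun y hy i => ?_⟩
      have h0 : (Real.toNNReal M : ℝ) = M := Real.coe_toNNReal _ hM
      calc dist ((i : C(ℝ, EuclideanSpace ℝ (Fin n))) x) ((i : C(ℝ, EuclideanSpace ℝ (Fin n))) y)
          ≤ (Real.toNNReal M : ℝ) * dist x y := (i.2.2).dist_le_mul x y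
        _ ≤ (M + 1) * dist y x := by
            rw [h0, dist_comm x y]
            exact mul_le_mul_of_nonneg_right (by linarith) dist_nonneg
        _ < (M + 1) * (ε / (M + 1)) := by
            exact mul_lt_mul_of_pos_left hy (by linarith)
        _ = ε := by field_simp
  have hmem : ∀ k, ContinuousMap.mk (F k) (hcont k) ∈ S := fun k => ⟨hbd k, hlip k⟩
  obtain ⟨g, hgS, φ, hφ, hconv⟩ := hS.isSeqCompact hmem
  refine ⟨φ, hφ, g, g.continuous, ?_⟩
  exact ContinuousMap.tendsto_iff_tendstoLocallyUniformly.mp hconv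

lemma projPer_eq {k t : ℝ} (hk : 0 < k) (h1 : -k ≤ t) (h2 : t < k) : projPer k t = t := by
  have hfl : ⌊(t + k) / (2 * k)⌋ = 0 := by
    rw [Int.floor_eq_zero_iff]
    constructor
    · apply div_nonneg (by linarith) (by linarith)
    · rw [div_lt_one (by linarith)]; linarith
  simp [projPer, hfl]

lemma tlu_comp {α β : Type*} [TopologicalSpace α] [UniformSpace β]
    {F : ℕ → α → β} {f : α → β} (h : TendstoLocallyUniformly F f atTop)
    {ψ : ℕ → ℕ} (hψ : StrictMono ψ) :
    TendstoLocallyUniformly (fun j => F (ψ j)) f atTop := by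
  intro u hu x
  obtain ⟨t, ht, hev⟩ := h u hu x
  exact ⟨t, ht, hψ.tendsto_atTop.eventually hev⟩

lemma exists_le_of_intervalIntegral {h : ℝ → ℝ} {a C : ℝ} (hc : Continuous h)
    (hI : (∫ t in a..(a+1), h t) ≤ C) : ∃ s ∈ Set.Icc a (a+1), h s ≤ C := by
  obtain ⟨s₀, hs₀m, hmin⟩ := (isCompact_Icc (a := a) (b := a+1)).exists_isMinOn
    (nonempty_Icc.mpr (by linarith)) hc.continuousOn
  refine ⟨s₀, hs₀m, ?_⟩
  by_contra hlt
  push_neg at hlt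
  have hmono : (∫ t in a..(a+1), h s₀) ≤ ∫ t in a..(a+1), h t := by
    apply intervalIntegral.integral_mono_on (by linarith)
      (intervalIntegrable_const) (hc.intervalIntegrable _ _)
    intro x hx
    exact hmin hx
  rw [intervalIntegral.integral_const] at hmono
  simp only [add_sub_cancel_left, one_smul] at hmono
  linarith

lemma gradient_jointly_continuous {n : ℕ} {V : ℝ → EuclideanSpace ℝ (Fin n) → ℝ}
    (hV : ContDiff ℝ 1 (Function.uncurry V)) :
    Continuous (fun p : ℝ × EuclideanSpace ℝ (Fin n) => gradient (V p.1) p.2) := by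
  have hd : ∀ p : ℝ × EuclideanSpace ℝ (Fin n),
      HasFDerivAt (V p.1) ((fderiv ℝ (Function.uncurry V) p).comp
        (ContinuousLinearMap.inr ℝ ℝ (EuclideanSpace ℝ (Fin n)))) p.2 := by
    intro p
    have h1 : HasFDerivAt (Function.uncurry V) (fderiv ℝ (Function.uncurry V) p) p :=
      ((hV.differentiable (by norm_num)) p).hasFDerivAt
    have h2 : HasFDerivAt (fun x : EuclideanSpace ℝ (Fin n) => (p.1, x))
        (ContinuousLinearMap.inr ℝ ℝ (EuclideanSpace ℝ (Fin n))) p.2 :=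
      HasFDerivAt.prodMk (hasFDerivAt_const p.1 p.2) (hasFDerivAt_id p.2)
    have h3 := h1.comp p.2 (by simpa using h2)
    exact h3
  have heq : (fun p : ℝ × EuclideanSpace ℝ (Fin n) => gradient (V p.1) p.2) =
      fun p => (InnerProductSpace.toDual ℝ (EuclideanSpace ℝ (Fin n))).symm
        ((fderiv ℝ (Function.uncurry V) p).comp
          (ContinuousLinearMap.inr ℝ ℝ (EuclideanSpace ℝ (Fin n)))) := by
    funext p
    rw [gradient, (hd p).fderiv]
  rw [heq]
  exact (InnerProductSpace.toDual ℝ (EuclideanSpace ℝ (Fin n))).symm.continuous.comp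
    ((hV.continuous_fderiv (by norm_num)).clm_comp continuous_const)

lemma periodic_deriv' {E : Type*} [NormedAddCommGroup E] [NormedSpace ℝ E]
    {f : ℝ → E} {c : ℝ} (h : Function.Periodic f c) :
    Function.Periodic (deriv f) c := by
  intro x
  have hfe : (fun y : ℝ => f (y + c)) = f := funext h
  rw [← deriv_comp_add_const f c x, hfe]

lemma sq_le_imp {x C : ℝ} (h : x^2 ≤ C) : x ≤ (C+1)/2 := by nlinarith [sq_nonneg (x-1)]

lemma integral_sub_interval_le {h : ℝ → ℝ} (hc : Continuous h) (hpos : ∀ t, 0 ≤ h t)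
    {a b a' b' : ℝ} (h1 : a' ≤ a) (h2 : a ≤ b) (h3 : b ≤ b') :
    (∫ t in a..b, h t) ≤ ∫ t in a'..b', h t := by
  have hi : ∀ u v : ℝ, IntervalIntegrable h volume u v := fun u v => hc.intervalIntegrable u v
  have e2 : (∫ t in a..b, h t) + (∫ t in b..b', h t) = ∫ t in a..b', h t :=
    intervalIntegral.integral_add_adjacent_intervals (hi a b) (hi b b')
  have e1 : (∫ t in a'..a, h t) + (∫ t in a..b', h t) = ∫ t in a'..b', h t :=
    intervalIntegral.integral_add_adjacent_intervals (hi a' a) (hi a b')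
  have n1 : 0 ≤ ∫ t in a'..a, h t :=
    intervalIntegral.integral_nonneg h1 (fun u _ => hpos u)
  have n2 : 0 ≤ ∫ t in b..b', h t :=
    intervalIntegral.integral_nonneg h3 (fun u _ => hpos u)
  linarith

lemma norm_intervalIntegral_eq {u : ℝ → ℝ} (hpos : ∀ t, 0 ≤ u t) (a b : ℝ) :
    (∫ t in a..b, ‖u t‖) = ∫ t in a..b, u t :=
  intervalIntegral.integral_congr (fun t _ => Real.norm_of_nonneg (hpos t))

end Aux

/-- **Approximative Method.** If each `2k`-periodic approximating problem
`q̈ + ∇_q V_k(t,q) = f_k(t)` has a `2k`-periodic solution `q_k` with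
`‖q_k‖_{E_k}` bounded, then a subsequence converges in `C²_loc` to a `W^{1,2}` solution of
`q̈ + ∇_q V(t,q) = f(t)` on all of `ℝ`. -/
theorem stmt14 {n : ℕ}
    (f : ℝ → EuclideanSpace ℝ (Fin n))
    (hfne : f ≠ 0) (hfbdd : ∃ C : ℝ, ∀ t : ℝ, ‖f t‖ ≤ C) (hfcont : Continuous f)
    (hfsq : Integrable (fun t : ℝ => ‖f t‖ ^ 2))
    (V : ℝ → EuclideanSpace ℝ (Fin n) → ℝ)
    (hVsmooth : ContDiff ℝ 1 (Function.uncurry V))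
    (hVgrad : ∀ L > (0:ℝ), ∃ C > (0:ℝ), ∀ (t : ℝ) (q : EuclideanSpace ℝ (Fin n)),
      ‖q‖ ≤ L → ‖gradient (V t) q‖ ≤ C)
    (Q : ℕ → ℝ → EuclideanSpace ℝ (Fin n))
    (hQ : ∀ k : ℕ, 1 ≤ k → ContDiff ℝ 2 (Q k) ∧ Function.Periodic (Q k) (2 * k) ∧
      ∀ t : ℝ, deriv (deriv (Q k)) t + gradient (V (projPer k t)) (Q k t) = f (projPer k t))
    (hbdd : ∃ C : ℝ, ∀ k : ℕ, 1 ≤ k →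
      (∫ t in (-(k:ℝ))..(k:ℝ), (‖deriv (Q k) t‖ ^ 2 + ‖Q k t‖ ^ 2)) ≤ C) :
    ∃ φ : ℕ → ℕ, StrictMono φ ∧ (∀ j, 1 ≤ φ j) ∧
      ∃ q : ℝ → EuclideanSpace ℝ (Fin n), ContDiff ℝ 2 q ∧
        Integrable (fun t : ℝ => ‖deriv q t‖ ^ 2 + ‖q t‖ ^ 2) ∧
        TendstoLocallyUniformly (fun j => Q (φ j)) q atTop ∧
        TendstoLocallyUniformly (fun j => deriv (Q (φ j))) (deriv q) atTop ∧
        TendstoLocallyUniformly (fun j => deriv (deriv (Q (φ j)))) (deriv (deriv q)) atTop ∧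
        ∀ t : ℝ, deriv (deriv q) t + gradient (V t) (q t) = f t := by
  classical
  obtain ⟨C, hC⟩ := hbdd
  obtain ⟨Cf, hCf⟩ := hfbdd
  -- basic regularity facts
  have hCD2 : ∀ k : ℕ, 1 ≤ k → ContDiff ℝ 2 (Q k) := fun k hk => (hQ k hk).1
  have hdiff : ∀ k : ℕ, 1 ≤ k → Differentiable ℝ (Q k) := fun k hk =>
    (hCD2 k hk).differentiable (by norm_num)
  have hcont1 : ∀ k : ℕ, 1 ≤ k → Continuous (deriv (Q k)) := fun k hk =>
    (hCD2 k hk).continuous_deriv (by norm_num)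
  have hCD1 : ∀ k : ℕ, 1 ≤ k → ContDiff ℝ 1 (deriv (Q k)) := by
    intro k hk
    have h2 : ContDiff ℝ ((1 : ℕ) + 1) (Q k) := by exact_mod_cast hCD2 k hk
    exact (contDiff_succ_iff_deriv.mp h2).2.2
  have hdiff1 : ∀ k : ℕ, 1 ≤ k → Differentiable ℝ (deriv (Q k)) := fun k hk =>
    (hCD1 k hk).differentiable (by norm_num)
  have hcont2 : ∀ k : ℕ, 1 ≤ k → Continuous (deriv (deriv (Q k))) := fun k hk =>
    (hCD1 k hk).continuous_deriv le_rfl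
  -- the energy density
  set h : ℕ → ℝ → ℝ := fun k t => ‖deriv (Q k) t‖ ^ 2 + ‖Q k t‖ ^ 2 with hh
  have hhcont : ∀ k : ℕ, 1 ≤ k → Continuous (h k) := fun k hk =>
    (((hcont1 k hk).norm.pow 2).add (((hdiff k hk).continuous).norm.pow 2))
  have hhpos : ∀ k t, 0 ≤ h k t := fun k t => by positivity
  have hC0 : 0 ≤ C := by
    have h1 := hC 1 le_rfl
    have h2 : 0 ≤ ∫ t in (-((1:ℕ):ℝ))..((1:ℕ):ℝ), (‖deriv (Q 1) t‖ ^ 2 + ‖Q 1 t‖ ^ 2) := by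
      apply intervalIntegral.integral_nonneg (by norm_num)
      intro u _; positivity
    linarith
  -- periodicity of the energy density
  have hperh : ∀ k : ℕ, 1 ≤ k → Function.Periodic (h k) (2 * k) := by
    intro k hk t
    have hper := (hQ k hk).2.1
    have hperd := periodic_deriv' hper
    simp only [hh, hper t, hperd t]
  -- integral over any unit window is at most C
  have hwin : ∀ k : ℕ, 1 ≤ k → ∀ a : ℝ, (∫ t in a..(a+1), h k t) ≤ C := by
    intro k hk a
    have hkR : (1:ℝ) ≤ (k:ℝ) := by exact_mod_cast hk
    have hintper : (∫ t in a..(a + 2*(k:ℝ)), h k t) = ∫ t in (-(k:ℝ))..(k:ℝ), h k t := by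
      have := (hperh k hk).intervalIntegral_add_eq a (-(k:ℝ))
      rwa [show -(k:ℝ) + 2*(k:ℝ) = (k:ℝ) by ring] at this
    have hle : (∫ t in a..(a+1), h k t) ≤ ∫ t in a..(a + 2*(k:ℝ)), h k t :=
      integral_sub_interval_le (hhcont k hk) (hhpos k) le_rfl (by linarith) (by linarith)
    calc (∫ t in a..(a+1), h k t) ≤ ∫ t in a..(a + 2*(k:ℝ)), h k t := hle
      _ = ∫ t in (-(k:ℝ))..(k:ℝ), h k t := hintper
      _ ≤ C := hC k hk
  -- pointwise bound on Q k
  have hQbd : ∀ k : ℕ, 1 ≤ k → ∀ t : ℝ, ‖Q k t‖ ≤ C + 1 := by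
    intro k hk t
    obtain ⟨s, hs, hsle⟩ := exists_le_of_intervalIntegral (hhcont k hk) (hwin k hk t)
    have hQs : ‖Q k s‖ ≤ (C+1)/2 := by
      apply sq_le_imp
      have : ‖Q k s‖ ^ 2 ≤ h k s := by
        simp only [hh]; linarith [sq_nonneg ‖deriv (Q k) s‖]
      linarith
    have hftc : (∫ u in t..s, deriv (Q k) u) = Q k s - Q k t := by
      apply intervalIntegral.integral_deriv_eq_sub (fun x _ => (hdiff k hk x))
      exact (hcont1 k hk).intervalIntegrable _ _
    have hnorm : ‖Q k t‖ ≤ ‖Q k s‖ + ‖∫ u in t..s, deriv (Q k) u‖ := by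
      rw [hftc]
      calc ‖Q k t‖ = ‖Q k s - (Q k s - Q k t)‖ := by congr 1; abel
        _ ≤ ‖Q k s‖ + ‖Q k s - Q k t‖ := norm_sub_le _ _
    have hIb : ‖∫ u in t..s, deriv (Q k) u‖ ≤ (C+1)/2 := by
      calc ‖∫ u in t..s, deriv (Q k) u‖ ≤ ∫ u in t..s, ‖deriv (Q k) u‖ :=
            intervalIntegral.norm_integral_le_integral_norm hs.1
        _ ≤ ∫ u in t..s, (‖deriv (Q k) u‖^2 + 1)/2 := by
            apply intervalIntegral.integral_mono_on hs.1
              ((hcont1 k hk).norm.intervalIntegrable _ _)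
              (((((hcont1 k hk).norm.pow 2).add continuous_const).div_const 2).intervalIntegrable _ _)
            intro x _
            simp only [Pi.add_apply, Pi.pow_apply]
            nlinarith [sq_nonneg (‖deriv (Q k) x‖ - 1)]
        _ ≤ ∫ u in t..(t+1), (‖deriv (Q k) u‖^2 + 1)/2 := by
            apply integral_sub_interval_le
              ((((hcont1 k hk).norm.pow 2).add continuous_const).div_const 2)
              (fun u => by simp only [Pi.add_apply, Pi.pow_apply]; positivity) le_rfl hs.1 hs.2
        _ ≤ ∫ u in t..(t+1), (h k u + 1)/2 := by
            apply intervalIntegral.integral_mono_on (by linarith)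
              (((((hcont1 k hk).norm.pow 2).add continuous_const).div_const 2).intervalIntegrable _ _)
              ((((hhcont k hk).add continuous_const).div_const 2).intervalIntegrable _ _)
            intro x _
            have : 0 ≤ ‖Q k x‖^2 := by positivity
            simp only [hh, Pi.add_apply, Pi.pow_apply]; linarith
        _ = ((∫ u in t..(t+1), h k u) + 1)/2 := by
            rw [intervalIntegral.integral_div]
            congr 1
            rw [intervalIntegral.integral_add ((hhcont k hk).intervalIntegrable _ _)
              (intervalIntegrable_const)]
            simp
        _ ≤ (C+1)/2 := by
            have := hwin k hk t
            linarith
    linarith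
  -- gradient bound
  obtain ⟨C₁, hC₁pos, hC₁⟩ := hVgrad (C+1) (by linarith)
  have hCf0 : 0 ≤ Cf := le_trans (norm_nonneg (f 0)) (hCf 0)
  -- second derivative bound
  have hQ2bd : ∀ k : ℕ, 1 ≤ k → ∀ t : ℝ, ‖deriv (deriv (Q k)) t‖ ≤ Cf + C₁ := by
    intro k hk t
    have heq := (hQ k hk).2.2 t
    have : deriv (deriv (Q k)) t = f (projPer k t) - gradient (V (projPer k t)) (Q k t) := by
      rw [← heq]; abel
    rw [this]
    calc ‖f (projPer k t) - gradient (V (projPer k t)) (Q k t)‖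
        ≤ ‖f (projPer k t)‖ + ‖gradient (V (projPer k t)) (Q k t)‖ := norm_sub_le _ _
      _ ≤ Cf + C₁ := add_le_add (hCf _) (hC₁ _ _ (hQbd k hk t))
  -- first derivative bound
  have hQ1bd : ∀ k : ℕ, 1 ≤ k → ∀ t : ℝ, ‖deriv (Q k) t‖ ≤ (C+1)/2 + (Cf + C₁) := by
    intro k hk t
    obtain ⟨s, hs, hsle⟩ := exists_le_of_intervalIntegral (hhcont k hk) (hwin k hk t)
    have hQs : ‖deriv (Q k) s‖ ≤ (C+1)/2 := by
      apply sq_le_imp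
      have : ‖deriv (Q k) s‖ ^ 2 ≤ h k s := by
        simp only [hh]; linarith [sq_nonneg ‖Q k s‖]
      linarith
    have hftc : (∫ u in t..s, deriv (deriv (Q k)) u) = deriv (Q k) s - deriv (Q k) t := by
      apply intervalIntegral.integral_deriv_eq_sub (fun x _ => (hdiff1 k hk x))
      exact (hcont2 k hk).intervalIntegrable _ _
    have hnorm : ‖deriv (Q k) t‖ ≤ ‖deriv (Q k) s‖ + ‖∫ u in t..s, deriv (deriv (Q k)) u‖ := by
      rw [hftc]
      calc ‖deriv (Q k) t‖ = ‖deriv (Q k) s - (deriv (Q k) s - deriv (Q k) t)‖ := by congr 1; abel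
        _ ≤ ‖deriv (Q k) s‖ + ‖deriv (Q k) s - deriv (Q k) t‖ := norm_sub_le _ _
    have hIb : ‖∫ u in t..s, deriv (deriv (Q k)) u‖ ≤ Cf + C₁ := by
      calc ‖∫ u in t..s, deriv (deriv (Q k)) u‖ ≤ ∫ u in t..s, ‖deriv (deriv (Q k)) u‖ :=
            intervalIntegral.norm_integral_le_integral_norm hs.1
        _ ≤ ∫ u in t..s, (Cf + C₁) := by
            apply intervalIntegral.integral_mono_on hs.1
              ((hcont2 k hk).norm.intervalIntegrable _ _) (intervalIntegrable_const)
            intro x _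
            exact hQ2bd k hk x
        _ = (s - t) * (Cf + C₁) := by rw [intervalIntegral.integral_const]; simp [smul_eq_mul]
        _ ≤ Cf + C₁ := by
            have h1 : s - t ≤ 1 := by linarith [hs.2]
            have h2 : 0 ≤ s - t := by linarith [hs.1]
            nlinarith
    linarith
  set M₁ : ℝ := (C+1)/2 + (Cf + C₁) with hM₁def
  have hM₁0 : 0 ≤ M₁ := by rw [hM₁def]; linarith
  have hCfC₁0 : 0 ≤ Cf + C₁ := by linarith
  have hlips : ∀ k : ℕ, 1 ≤ k → LipschitzWith (Real.toNNReal M₁) (Q k) := by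
    intro k hk
    apply lipschitzWith_of_nnnorm_deriv_le (hdiff k hk)
    intro x
    rw [← NNReal.coe_le_coe, coe_nnnorm, Real.coe_toNNReal _ hM₁0]
    exact hQ1bd k hk x
  have hlips1 : ∀ k : ℕ, 1 ≤ k → LipschitzWith (Real.toNNReal (Cf + C₁)) (deriv (Q k)) := by
    intro k hk
    apply lipschitzWith_of_nnnorm_deriv_le (hdiff1 k hk)
    intro x
    rw [← NNReal.coe_le_coe, coe_nnnorm, Real.coe_toNNReal _ hCfC₁0]
    exact hQ2bd k hk x
  -- first extraction: the functions themselves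
  obtain ⟨φ₁, hφ₁, q, hqcont, hTLU1⟩ := ascoli_seq (C+1) M₁ (fun j => Q (j+1))
    (fun j => (hdiff (j+1) (Nat.le_add_left 1 j)).continuous)
    (fun j t => hQbd (j+1) (Nat.le_add_left 1 j) t) hM₁0
    (fun j => hlips (j+1) (Nat.le_add_left 1 j))
  -- second extraction: the derivatives
  obtain ⟨φ₂, hφ₂, p, hpcont, hTLU2⟩ := ascoli_seq M₁ (Cf + C₁)
    (fun j => deriv (Q (φ₁ j + 1)))
    (fun j => hcont1 _ (Nat.le_add_left 1 _))
    (fun j t => hQ1bd _ (Nat.le_add_left 1 _) t) hCfC₁0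
    (fun j => hlips1 _ (Nat.le_add_left 1 _))
  set φ : ℕ → ℕ := fun j => φ₁ (φ₂ j) + 1 with hφdef
  have hφ : StrictMono φ := fun a b hab => Nat.add_lt_add_right (hφ₁ (hφ₂ hab)) 1
  have hφ1 : ∀ j, 1 ≤ φ j := fun j => Nat.le_add_left 1 _
  have hφgt : ∀ j, j < φ j := fun j =>
    Nat.lt_succ_of_le (le_trans hφ₂.le_apply hφ₁.le_apply)
  have hTLU1' : TendstoLocallyUniformly (fun j => Q (φ j)) q atTop := tlu_comp hTLU1 hφ₂
  have hTLU2' : TendstoLocallyUniformly (fun j => deriv (Q (φ j))) p atTop := hTLU2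
  -- pointwise limits
  have hptw : ∀ t, Tendsto (fun j => Q (φ j) t) atTop (𝓝 (q t)) := fun t =>
    (tendstoLocallyUniformlyOn_univ.mpr hTLU1').tendsto_at (Set.mem_univ t)
  have hptw1 : ∀ t, Tendsto (fun j => deriv (Q (φ j)) t) atTop (𝓝 (p t)) := fun t =>
    (tendstoLocallyUniformlyOn_univ.mpr hTLU2').tendsto_at (Set.mem_univ t)
  have hqbd : ∀ t, ‖q t‖ ≤ C + 1 := fun t =>
    le_of_tendsto (hptw t).norm (Eventually.of_forall fun j => hQbd _ (hφ1 j) t)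
  have hpbd : ∀ t, ‖p t‖ ≤ M₁ := fun t =>
    le_of_tendsto (hptw1 t).norm (Eventually.of_forall fun j => hQ1bd _ (hφ1 j) t)
  -- the equation away from the gluing points
  have hODE : ∀ (k : ℕ), 1 ≤ k → ∀ t : ℝ, -(k:ℝ) ≤ t → t < (k:ℝ) →
      deriv (deriv (Q k)) t = f t - gradient (V t) (Q k t) := by
    intro k hk t h1 h2
    have hkpos : (0:ℝ) < (k:ℝ) := by exact_mod_cast Nat.lt_of_lt_of_le Nat.zero_lt_one hk
    have hpp := projPer_eq hkpos h1 h2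
    have heq := (hQ k hk).2.2 t
    rw [hpp] at heq
    rw [← heq]; abel
  have hGcont : Continuous (fun pr : ℝ × EuclideanSpace ℝ (Fin n) => gradient (V pr.1) pr.2) :=
    gradient_jointly_continuous hVsmooth
  set g : ℝ → EuclideanSpace ℝ (Fin n) := fun t => f t - gradient (V t) (q t) with hgdef
  have hgcont : Continuous g :=
    hfcont.sub (hGcont.comp (continuous_id.prodMk hqcont))
  -- uniform convergence of the second derivatives on compacts
  have hTLU3 : TendstoLocallyUniformly (fun j => deriv (deriv (Q (φ j)))) g atTop := by
    rw [tendstoLocallyUniformly_iff_forall_isCompact]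
    intro K hK
    obtain ⟨r, hr⟩ := hK.isBounded.subset_closedBall 0
    set m : ℕ := ⌈r⌉₊ + 1 with hmdef
    have hrm : r ≤ (m:ℝ) := le_trans (Nat.le_ceil r) (by exact_mod_cast Nat.le_succ ⌈r⌉₊)
    have hKm : K ⊆ Set.Icc (-(m:ℝ)) (m:ℝ) := by
      intro x hx
      have hx' := hr hx
      rw [Metric.mem_closedBall, Real.dist_eq, sub_zero] at hx'
      have := abs_le.mp hx'
      exact ⟨by linarith, by linarith⟩
    have hQU : TendstoUniformlyOn (fun j => Q (φ j)) q atTop K :=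
      (tendstoLocallyUniformly_iff_forall_isCompact.mp hTLU1') K hK
    rw [Metric.tendstoUniformlyOn_iff]
    intro ε hε
    set K' : Set (ℝ × EuclideanSpace ℝ (Fin n)) :=
      Set.Icc (-(m:ℝ)) (m:ℝ) ×ˢ Metric.closedBall (0 : EuclideanSpace ℝ (Fin n)) (C+1)
      with hK'def
    have hK'c : IsCompact K' := isCompact_Icc.prod (isCompact_closedBall _ _)
    have hGU : UniformContinuousOn
        (fun pr : ℝ × EuclideanSpace ℝ (Fin n) => gradient (V pr.1) pr.2) K' :=
      hK'c.uniformContinuousOn_of_continuous hGcont.continuousOn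
    rw [Metric.uniformContinuousOn_iff] at hGU
    obtain ⟨δ, hδ, hδG⟩ := hGU ε hε
    have hQUδ := (Metric.tendstoUniformlyOn_iff.mp hQU) δ hδ
    filter_upwards [hQUδ, eventually_ge_atTop m] with j hj hjm t ht
    have htm := hKm ht
    have hmφ : (m:ℝ) < (φ j : ℝ) := by exact_mod_cast Nat.lt_of_le_of_lt hjm (hφgt j)
    have heq : deriv (deriv (Q (φ j))) t = f t - gradient (V t) (Q (φ j) t) :=
      hODE (φ j) (hφ1 j) t (by linarith [htm.1]) (by linarith [htm.2])
    rw [heq]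
    have hdeq : dist (g t) (f t - gradient (V t) (Q (φ j) t)) =
        dist (gradient (V t) (q t)) (gradient (V t) (Q (φ j) t)) := by
      rw [hgdef]; exact dist_sub_left _ _ _
    rw [hdeq]
    have hm1 : (t, q t) ∈ K' := by
      refine ⟨htm, ?_⟩
      rw [Metric.mem_closedBall, dist_zero_right]
      exact hqbd t
    have hm2 : (t, Q (φ j) t) ∈ K' := by
      refine ⟨htm, ?_⟩
      rw [Metric.mem_closedBall, dist_zero_right]
      exact hQbd _ (hφ1 j) t
    apply hδG (t, q t) hm1 (t, Q (φ j) t) hm2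
    rw [Prod.dist_eq]
    simp only [dist_self]
    exact max_lt hδ (hj t ht)
  -- q' = p and p' = g
  have hqd : ∀ x : ℝ, HasDerivAt q (p x) x := by
    intro x
    exact hasDerivAt_of_tendstoLocallyUniformlyOn isOpen_univ
      (tendstoLocallyUniformlyOn_univ.mpr hTLU2')
      (Eventually.of_forall fun j y _ => ((hdiff _ (hφ1 j)) y).hasDerivAt)
      (fun y _ => hptw y) (Set.mem_univ x)
  have hderivq : deriv q = p := funext fun x => (hqd x).deriv
  have hpd : ∀ x : ℝ, HasDerivAt p (g x) x := by
    intro x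
    exact hasDerivAt_of_tendstoLocallyUniformlyOn isOpen_univ
      (tendstoLocallyUniformlyOn_univ.mpr hTLU3)
      (Eventually.of_forall fun j y _ => ((hdiff1 _ (hφ1 j)) y).hasDerivAt)
      (fun y _ => hptw1 y) (Set.mem_univ x)
  have hderivp : deriv p = g := funext fun x => (hpd x).deriv
  have hqdiff : Differentiable ℝ q := fun x => (hqd x).differentiableAt
  have hpdiff : Differentiable ℝ p := fun x => (hpd x).differentiableAt
  have hq2 : ContDiff ℝ 2 q := by
    have h12 : ContDiff ℝ ((1:ℕ) + 1) q := by
      rw [contDiff_succ_iff_deriv]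
      refine ⟨hqdiff, by simp, ?_⟩
      rw [hderivq]
      exact contDiff_one_iff_deriv.mpr ⟨hpdiff, by rw [hderivp]; exact hgcont⟩
    exact_mod_cast h12
  -- integrability of the limit
  have hhq : Continuous (fun t : ℝ => ‖deriv q t‖^2 + ‖q t‖^2) := by
    rw [hderivq]; exact (hpcont.norm.pow 2).add (hqcont.norm.pow 2)
  have hbint : ∀ m : ℕ, (∫ t in (-(m:ℝ))..(m:ℝ), (‖deriv q t‖^2 + ‖q t‖^2)) ≤ C := by
    intro m
    have hjb : ∀ j, m ≤ j → (∫ t in (-(m:ℝ))..(m:ℝ), h (φ j) t) ≤ C := by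
      intro j hjm
      have hmφ : (m:ℝ) ≤ (φ j : ℝ) := by exact_mod_cast le_trans hjm (hφgt j).le
      calc (∫ t in (-(m:ℝ))..(m:ℝ), h (φ j) t)
          ≤ ∫ t in (-(φ j:ℝ))..(φ j:ℝ), h (φ j) t :=
            integral_sub_interval_le (hhcont _ (hφ1 j)) (hhpos _) (by linarith) (by linarith) hmφ
        _ ≤ C := hC _ (hφ1 j)
    have htendsto : Tendsto (fun j => ∫ t in (-(m:ℝ))..(m:ℝ), h (φ j) t) atTop
        (𝓝 (∫ t in (-(m:ℝ))..(m:ℝ), (‖deriv q t‖^2 + ‖q t‖^2))) := by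
      have hlim : ∀ t : ℝ, Tendsto (fun j => h (φ j) t) atTop
          (𝓝 (‖deriv q t‖^2 + ‖q t‖^2)) := by
        intro t
        rw [hderivq]
        exact (((hptw1 t).norm.pow 2)).add (((hptw t).norm.pow 2))
      apply intervalIntegral.tendsto_integral_filter_of_dominated_convergence
        (bound := fun _ => M₁^2 + (C+1)^2)
      · exact Eventually.of_forall fun j => ((hhcont _ (hφ1 j)).aestronglyMeasurable)
      · apply Eventually.of_forall
        intro j
        apply ae_of_all
        intro t _
        have h1 : ‖deriv (Q (φ j)) t‖^2 ≤ M₁^2 :=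
          pow_le_pow_left₀ (norm_nonneg _) (hQ1bd _ (hφ1 j) t) 2
        have h2 : ‖Q (φ j) t‖^2 ≤ (C+1)^2 :=
          pow_le_pow_left₀ (norm_nonneg _) (hQbd _ (hφ1 j) t) 2
        have hnn : 0 ≤ h (φ j) t := hhpos _ t
        rw [Real.norm_of_nonneg hnn]
        simp only [hh]
        linarith
      · exact intervalIntegrable_const
      · exact ae_of_all _ fun t _ => hlim t
    exact le_of_tendsto htendsto (eventually_atTop.mpr ⟨m, hjb⟩)
  have hint : Integrable (fun t : ℝ => ‖deriv q t‖^2 + ‖q t‖^2) := by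
    apply MeasureTheory.integrable_of_intervalIntegral_norm_bounded
      (a := fun m : ℕ => -(m:ℝ)) (b := fun m : ℕ => (m:ℝ)) (l := atTop) C
    · intro i
      exact hhq.integrableOn_Ioc
    · exact tendsto_neg_atBot_iff.mpr tendsto_natCast_atTop_atTop
    · exact tendsto_natCast_atTop_atTop
    · apply Eventually.of_forall
      intro m
      have hcongr := norm_intervalIntegral_eq
        (u := fun t => ‖deriv q t‖^2 + ‖q t‖^2) (fun t => by positivity) (-(m:ℝ)) (m:ℝ)
      rw [hcongr]
      exact hbint m
  refine ⟨φ, hφ, hφ1, q, hq2, hint, hTLU1', ?_, ?_, ?_⟩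
  · rw [hderivq]; exact hTLU2'
  · rw [hderivq, hderivp]; exact hTLU3
  · intro t
    rw [hderivq, hderivp, hgdef]
    exact sub_add_cancel _ _
end

section
/- Let V : ℝ × ℝⁿ → ℝ be C¹-smooth with gradient in the second variable ∇_qV, let f : ℝ → ℝⁿ be continuous with ∫_{−∞}^{∞}|f(t)|² dt < ∞, and let q : ℝ → ℝⁿ be a twice continuously differentiable solution of q̈(t) + ∇_qV(t, q(t)) = f(t) for all t ∈ ℝ. If ∇_qV(t, q(t)) → 0 as |t| → ∞, then ∫_{t−1/2}^{t+1/2} |q̈(s)|² ds → 0 as |t| → ∞; if moreover ∫_{t−1/2}^{t+1/2} |q̇(s)|² ds → 0 as |t| → ∞, then q̇(t) → 0 as |t| → ∞. -/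
open MeasureTheory Filter

/-- Tail of an integrable nonneg function over windows tends to 0. -/
lemma aux_tail {F : ℝ → ℝ} (hF : Integrable F) (h0 : ∀ s, 0 ≤ F s)
    {l : Filter ℝ} [l.IsCountablyGenerated]
    (hl : ∀ a : ℝ, ∀ᶠ t in l, a ∉ Set.Ioc (t - 1/2) (t + 1/2)) :
    Tendsto (fun t => ∫ s in (t - 1/2)..(t + 1/2), F s) l (nhds 0) := by
  have key : ∀ t : ℝ, (∫ s in (t - 1/2)..(t + 1/2), F s)
      = ∫ s, (Set.Ioc (t - 1/2) (t + 1/2)).indicator F s := by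
    intro t
    rw [intervalIntegral.integral_of_le (by linarith), ← integral_indicator measurableSet_Ioc]
  simp only [key]
  have h0' : Tendsto (fun _ : ℝ => (0 : ℝ)) l (nhds 0) := tendsto_const_nhds
  have := tendsto_integral_filter_of_dominated_convergence (μ := volume) (l := l)
    (F := fun t s => (Set.Ioc (t - 1/2) (t + 1/2)).indicator F s) (f := fun _ => (0:ℝ)) F
    (Eventually.of_forall fun t => hF.aestronglyMeasurable.indicator measurableSet_Ioc)
    (Eventually.of_forall fun t => Eventually.of_forall fun s => by
      simp only [Real.norm_eq_abs]
      rw [Set.indicator_apply]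
      split_ifs with h
      · rw [abs_of_nonneg (h0 s)]
      · simpa using h0 s)
    hF
    (Eventually.of_forall fun s => by
      have := hl s
      refine Tendsto.congr' ?_ tendsto_const_nhds
      filter_upwards [this] with t ht
      exact (Set.indicator_of_notMem ht F).symm)
  simpa using this


/-- window integral of a pointwise-small nonneg function tends to 0. -/
lemma aux_window {h : ℝ → ℝ} (hc : Continuous h) (h0 : ∀ s, 0 ≤ h s)
    {l : Filter ℝ}
    (hwin : ∀ P : ℝ → Prop, (∀ᶠ s in l, P s) →
      ∀ᶠ t in l, ∀ s ∈ Set.Icc (t - 1/2) (t + 1/2), P s)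
    (hh : Tendsto h l (nhds 0)) :
    Tendsto (fun t => ∫ s in (t - 1/2)..(t + 1/2), h s) l (nhds 0) := by
  rw [NormedAddCommGroup.tendsto_nhds_zero]
  intro ε hε
  have hsmall : ∀ᶠ s in l, h s ≤ ε / 2 := by
    have := (NormedAddCommGroup.tendsto_nhds_zero.mp hh) (ε/2) (by linarith)
    filter_upwards [this] with s hs
    calc h s ≤ |h s| := le_abs_self _
    _ = ‖h s‖ := rfl
    _ ≤ ε / 2 := le_of_lt hs
  filter_upwards [hwin _ hsmall] with t ht
  have hab : t - 1/2 ≤ t + 1/2 := by linarith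
  have hnn : 0 ≤ ∫ s in (t - 1/2)..(t + 1/2), h s :=
    intervalIntegral.integral_nonneg hab (fun u _ => h0 u)
  have hle : (∫ s in (t - 1/2)..(t + 1/2), h s) ≤ ∫ _s in (t - 1/2)..(t + 1/2), (ε/2 : ℝ) :=
    intervalIntegral.integral_mono_on hab (hc.intervalIntegrable _ _)
      intervalIntegrable_const ht
  rw [intervalIntegral.integral_const] at hle
  have : (t + 1/2 - (t - 1/2)) • (ε/2 : ℝ) = ε/2 := by
    rw [show t + 1/2 - (t - 1/2) = (1:ℝ) by ring, one_smul]
  rw [this] at hle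
  rw [Real.norm_eq_abs, abs_of_nonneg hnn]
  linarith

/-- If ∫ window h² → 0 then ∫ window h → 0, for h continuous nonneg. -/
lemma aux_sq_to_lin {h : ℝ → ℝ} (hc : Continuous h) (h0 : ∀ s, 0 ≤ h s)
    {l : Filter ℝ}
    (H : Tendsto (fun t => ∫ s in (t - 1/2)..(t + 1/2), h s ^ 2) l (nhds 0)) :
    Tendsto (fun t => ∫ s in (t - 1/2)..(t + 1/2), h s) l (nhds 0) := by
  rw [NormedAddCommGroup.tendsto_nhds_zero]
  intro ε hε
  have hsq : ∀ᶠ t in l, ‖∫ s in (t - 1/2)..(t + 1/2), h s ^ 2‖ < ε^2/2 :=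
    (NormedAddCommGroup.tendsto_nhds_zero.mp H) (ε^2/2) (by positivity)
  filter_upwards [hsq] with t ht
  have hab : t - 1/2 ≤ t + 1/2 := by linarith
  have hnn : 0 ≤ ∫ s in (t - 1/2)..(t + 1/2), h s :=
    intervalIntegral.integral_nonneg hab (fun u _ => h0 u)
  have hnn2 : 0 ≤ ∫ s in (t - 1/2)..(t + 1/2), h s ^ 2 :=
    intervalIntegral.integral_nonneg hab (fun u _ => sq_nonneg _)
  rw [Real.norm_eq_abs, abs_of_nonneg hnn2] at ht
  have hle : (∫ s in (t - 1/2)..(t + 1/2), h s)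
      ≤ ∫ s in (t - 1/2)..(t + 1/2), (ε/4 + h s ^ 2 / ε) := by
    refine intervalIntegral.integral_mono_on hab (hc.intervalIntegrable _ _)
      (((continuous_const.add ((hc.pow 2).div_const ε)).intervalIntegrable _ _)) ?_
    intro s _
    have key : h s * ε ≤ ε^2/4 + h s ^ 2 := by nlinarith [sq_nonneg (h s - ε/2)]
    calc h s = (h s * ε) / ε := by field_simp
    _ ≤ (ε^2/4 + h s ^ 2) / ε := by gcongr
    _ = ε/4 + h s ^ 2 / ε := by field_simp
  have heq2 : (∫ s in (t - 1/2)..(t + 1/2), (ε/4 + h s ^ 2 / ε))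
      = ε/4 + (∫ s in (t - 1/2)..(t + 1/2), h s ^ 2) / ε := by
    rw [intervalIntegral.integral_add (f := fun _ => ε/4) (g := fun s => h s ^ 2 / ε) intervalIntegrable_const
      (((hc.pow 2).div_const ε).intervalIntegrable _ _),
      intervalIntegral.integral_const, intervalIntegral.integral_div,
      show t + 1/2 - (t - 1/2) = (1:ℝ) by ring, one_smul]
  rw [heq2] at hle
  rw [Real.norm_eq_abs, abs_of_nonneg hnn]
  have : (∫ s in (t - 1/2)..(t + 1/2), h s ^ 2) / ε < ε/2 := by
    rw [div_lt_iff₀ hε]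
    nlinarith
  linarith

/-- If `q` is a `C²` solution of `q̈ + ∇_q V(t,q) = f` with `f ∈ L²`
and `∇_q V(t, q(t)) → 0` as `|t| → ∞`, then `∫_{t-1/2}^{t+1/2} |q̈|² → 0` as `|t| → ∞`;
if moreover `∫_{t-1/2}^{t+1/2} |q̇|² → 0` as `|t| → ∞`, then `q̇(t) → 0` as `|t| → ∞`. -/
theorem stmt16 {n : ℕ}
    (V : ℝ → EuclideanSpace ℝ (Fin n) → ℝ)
    (hVsmooth : ContDiff ℝ 1 (Function.uncurry V))
    (f : ℝ → EuclideanSpace ℝ (Fin n)) (hfcont : Continuous f)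
    (hfsq : Integrable (fun t : ℝ => ‖f t‖ ^ 2))
    (q : ℝ → EuclideanSpace ℝ (Fin n)) (hq : ContDiff ℝ 2 q)
    (heq : ∀ t : ℝ, deriv (deriv q) t + gradient (V t) (q t) = f t)
    (hgradTop : Tendsto (fun t : ℝ => gradient (V t) (q t)) atTop (nhds 0))
    (hgradBot : Tendsto (fun t : ℝ => gradient (V t) (q t)) atBot (nhds 0)) :
    (Tendsto (fun t : ℝ => ∫ s in (t - 1/2)..(t + 1/2), ‖deriv (deriv q) s‖ ^ 2)
        atTop (nhds 0) ∧
      Tendsto (fun t : ℝ => ∫ s in (t - 1/2)..(t + 1/2), ‖deriv (deriv q) s‖ ^ 2)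
        atBot (nhds 0)) ∧
    ((Tendsto (fun t : ℝ => ∫ s in (t - 1/2)..(t + 1/2), ‖deriv q s‖ ^ 2)
        atTop (nhds 0) ∧
      Tendsto (fun t : ℝ => ∫ s in (t - 1/2)..(t + 1/2), ‖deriv q s‖ ^ 2)
        atBot (nhds 0)) →
      Tendsto (deriv q) atTop (nhds 0) ∧ Tendsto (deriv q) atBot (nhds 0)) := by
  set G : ℝ → EuclideanSpace ℝ (Fin n) := fun t => gradient (V t) (q t) with hGdef
  have hGeq : ∀ t, G t = f t - deriv (deriv q) t := fun t => by
    have := heq t; simp only [hGdef]; linear_combination (norm := module) this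
  -- regularity
  have hq2 : ContDiff ℝ (1 + 1) q := by
    rw [one_add_one_eq_two]; exact hq
  have hq1 : ContDiff ℝ 1 (deriv q) := (contDiff_succ_iff_deriv.mp hq2).2.2
  have hdq_cont : Continuous (deriv q) := hq1.continuous
  have hd2 : Differentiable ℝ (deriv q) := (contDiff_one_iff_deriv.mp hq1).1
  have hddq_cont : Continuous (deriv (deriv q)) := (contDiff_one_iff_deriv.mp hq1).2
  have hGcont : Continuous G := by
    have : Continuous (fun t => f t - deriv (deriv q) t) := hfcont.sub hddq_cont
    exact this.congr fun t => (hGeq t).symm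
  -- window/filter facts
  have hwinTop : ∀ P : ℝ → Prop, (∀ᶠ s in atTop, P s) →
      ∀ᶠ t in atTop, ∀ s ∈ Set.Icc (t - 1/2) (t + 1/2), P s := by
    intro P hP
    obtain ⟨T, hT⟩ := eventually_atTop.mp hP
    exact eventually_atTop.mpr ⟨T + 1/2, fun t ht s hs => hT s (by
      have := hs.1; linarith)⟩
  have hwinBot : ∀ P : ℝ → Prop, (∀ᶠ s in atBot, P s) →
      ∀ᶠ t in atBot, ∀ s ∈ Set.Icc (t - 1/2) (t + 1/2), P s := by
    intro P hP
    obtain ⟨T, hT⟩ := eventually_atBot.mp hP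
    exact eventually_atBot.mpr ⟨T - 1/2, fun t ht s hs => hT s (by
      have := hs.2; linarith)⟩
  have hlTop : ∀ a : ℝ, ∀ᶠ t in atTop, a ∉ Set.Ioc (t - 1/2) (t + 1/2) := by
    intro a
    exact eventually_atTop.mpr ⟨a + 1/2, fun t ht hmem => by
      have := hmem.1; linarith⟩
  have hlBot : ∀ a : ℝ, ∀ᶠ t in atBot, a ∉ Set.Ioc (t - 1/2) (t + 1/2) := by
    intro a
    exact eventually_atBot.mpr ⟨a - 1, fun t ht hmem => by
      have := hmem.2; linarith⟩
  -- Part 1, generic in the filter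
  have part1 : ∀ (l : Filter ℝ), l.IsCountablyGenerated →
      (∀ P : ℝ → Prop, (∀ᶠ s in l, P s) →
        ∀ᶠ t in l, ∀ s ∈ Set.Icc (t - 1/2) (t + 1/2), P s) →
      (∀ a : ℝ, ∀ᶠ t in l, a ∉ Set.Ioc (t - 1/2) (t + 1/2)) →
      Tendsto G l (nhds 0) →
      Tendsto (fun t : ℝ => ∫ s in (t - 1/2)..(t + 1/2), ‖deriv (deriv q) s‖ ^ 2)
        l (nhds 0) := by
    intro l hlc hwin hl hG
    have hGsq : Tendsto (fun s => ‖G s‖ ^ 2) l (nhds 0) := by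
      have := (hG.norm).pow 2
      simpa using this
    have Y : Tendsto (fun t => ∫ s in (t - 1/2)..(t + 1/2), ‖G s‖ ^ 2) l (nhds 0) :=
      aux_window (hGcont.norm.pow 2) (fun s => sq_nonneg _) hwin hGsq
    have X : Tendsto (fun t => ∫ s in (t - 1/2)..(t + 1/2), ‖f s‖ ^ 2) l (nhds 0) := by
      haveI := hlc
      exact aux_tail hfsq (fun s => sq_nonneg _) hl
    refine squeeze_zero (fun t => intervalIntegral.integral_nonneg (by linarith)
      (fun u _ => sq_nonneg _)) (g := fun t => 2 * (∫ s in (t - 1/2)..(t + 1/2), ‖f s‖ ^ 2)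
        + 2 * (∫ s in (t - 1/2)..(t + 1/2), ‖G s‖ ^ 2)) ?_ ?_
    · intro t
      have hab : t - 1/2 ≤ t + 1/2 := by linarith
      have step : (∫ s in (t - 1/2)..(t + 1/2), ‖deriv (deriv q) s‖ ^ 2)
          ≤ ∫ s in (t - 1/2)..(t + 1/2), (2 * ‖f s‖ ^ 2 + 2 * ‖G s‖ ^ 2) := by
        refine intervalIntegral.integral_mono_on hab
          ((hddq_cont.norm.pow 2).intervalIntegrable _ _)
          (((continuous_const.mul (hfcont.norm.pow 2)).add
            (continuous_const.mul (hGcont.norm.pow 2))).intervalIntegrable _ _) ?_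
        intro s _
        have hde : deriv (deriv q) s = f s - G s := by
          rw [hGeq s]; abel
        rw [hde]
        have h1 : ‖f s - G s‖ ≤ ‖f s‖ + ‖G s‖ := norm_sub_le _ _
        nlinarith [norm_nonneg (f s - G s), norm_nonneg (f s), norm_nonneg (G s),
          sq_nonneg (‖f s‖ - ‖G s‖)]
      calc (∫ s in (t - 1/2)..(t + 1/2), ‖deriv (deriv q) s‖ ^ 2)
          ≤ ∫ s in (t - 1/2)..(t + 1/2), (2 * ‖f s‖ ^ 2 + 2 * ‖G s‖ ^ 2) := step
        _ = 2 * (∫ s in (t - 1/2)..(t + 1/2), ‖f s‖ ^ 2)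
            + 2 * (∫ s in (t - 1/2)..(t + 1/2), ‖G s‖ ^ 2) := by
          rw [intervalIntegral.integral_add (f := fun s => 2 * ‖f s‖ ^ 2) (g := fun s => 2 * ‖G s‖ ^ 2)
            ((continuous_const.mul (hfcont.norm.pow 2)).intervalIntegrable _ _)
            ((continuous_const.mul (hGcont.norm.pow 2)).intervalIntegrable _ _),
            intervalIntegral.integral_const_mul, intervalIntegral.integral_const_mul]
    · have := (X.const_mul 2).add (Y.const_mul 2)
      simpa using this
  have c1top := part1 atTop inferInstance hwinTop hlTop hgradTop
  have c1bot := part1 atBot inferInstance hwinBot hlBot hgradBot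
  refine ⟨⟨c1top, c1bot⟩, ?_⟩
  rintro ⟨h1top, h1bot⟩
  -- Part 2, generic in the filter
  have part2 : ∀ (l : Filter ℝ),
      Tendsto (fun t : ℝ => ∫ s in (t - 1/2)..(t + 1/2), ‖deriv q s‖ ^ 2) l (nhds 0) →
      Tendsto (fun t : ℝ => ∫ s in (t - 1/2)..(t + 1/2), ‖deriv (deriv q) s‖ ^ 2) l (nhds 0) →
      Tendsto (deriv q) l (nhds 0) := by
    intro l h1 h2
    have hB : Tendsto (fun t => ∫ s in (t - 1/2)..(t + 1/2), ‖deriv (deriv q) s‖) l (nhds 0) :=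
      aux_sq_to_lin hddq_cont.norm (fun s => norm_nonneg _) h2
    have hC : Tendsto (fun t => ∫ s in (t - 1/2)..(t + 1/2), ‖deriv q s‖) l (nhds 0) :=
      aux_sq_to_lin hdq_cont.norm (fun s => norm_nonneg _) h1
    have key : ∀ t : ℝ, ‖deriv q t‖ ≤ (∫ s in (t - 1/2)..(t + 1/2), ‖deriv q s‖)
        + (∫ s in (t - 1/2)..(t + 1/2), ‖deriv (deriv q) s‖) := by
      intro t
      have hab : t - 1/2 ≤ t + 1/2 := by linarith
      set B := ∫ s in (t - 1/2)..(t + 1/2), ‖deriv (deriv q) s‖ with hBdef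
      have step1 : ∀ s ∈ Set.Icc (t - 1/2) (t + 1/2), ‖deriv q t‖ ≤ ‖deriv q s‖ + B := by
        intro s hs
        have hftc : (∫ u in s..t, deriv (deriv q) u) = deriv q t - deriv q s :=
          intervalIntegral.integral_deriv_eq_sub (fun u _ => hd2 u)
            (hddq_cont.intervalIntegrable _ _)
        have h2' : ‖∫ u in s..t, deriv (deriv q) u‖ ≤ B := by
          rcases le_total s t with hst | hst
          · calc ‖∫ u in s..t, deriv (deriv q) u‖
                ≤ ∫ u in s..t, ‖deriv (deriv q) u‖ :=
                  intervalIntegral.norm_integral_le_integral_norm hst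
              _ ≤ B := intervalIntegral.integral_mono_interval hs.1 hst (by linarith)
                  (Eventually.of_forall fun u => norm_nonneg _)
                  (hddq_cont.norm.intervalIntegrable _ _)
          · rw [intervalIntegral.integral_symm, norm_neg]
            calc ‖∫ u in t..s, deriv (deriv q) u‖
                ≤ ∫ u in t..s, ‖deriv (deriv q) u‖ :=
                  intervalIntegral.norm_integral_le_integral_norm hst
              _ ≤ B := intervalIntegral.integral_mono_interval (by linarith) hst hs.2
                  (Eventually.of_forall fun u => norm_nonneg _)
                  (hddq_cont.norm.intervalIntegrable _ _)
        calc ‖deriv q t‖ = ‖deriv q s + (deriv q t - deriv q s)‖ := by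
              rw [add_sub_cancel]
          _ ≤ ‖deriv q s‖ + ‖deriv q t - deriv q s‖ := norm_add_le _ _
          _ = ‖deriv q s‖ + ‖∫ u in s..t, deriv (deriv q) u‖ := by rw [hftc]
          _ ≤ ‖deriv q s‖ + B := by linarith
      have hlen : t + 1/2 - (t - 1/2) = (1 : ℝ) := by ring
      calc ‖deriv q t‖ = ∫ _s in (t - 1/2)..(t + 1/2), ‖deriv q t‖ := by
            rw [intervalIntegral.integral_const, hlen, one_smul]
        _ ≤ ∫ s in (t - 1/2)..(t + 1/2), (‖deriv q s‖ + B) :=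
            intervalIntegral.integral_mono_on hab intervalIntegrable_const
              ((hdq_cont.norm.add continuous_const).intervalIntegrable _ _) step1
        _ = (∫ s in (t - 1/2)..(t + 1/2), ‖deriv q s‖) + B := by
            rw [intervalIntegral.integral_add (hdq_cont.norm.intervalIntegrable _ _)
              intervalIntegrable_const, intervalIntegral.integral_const, hlen, one_smul]
    refine squeeze_zero_norm key ?_
    simpa using hC.add hB
  exact ⟨part2 atTop h1top c1top, part2 atBot h1bot c1bot⟩
end
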